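/- arXiv:math/0405269 — 8 statements merged into one kernel-verified Lean document; each statement's English description precedes it below -/
import Mathlib

section
/- Let $w_1,w_2,w_3,w_4$ be four distinct points on the boundary of the upper half-space model of $\mathbb{H}^3$ (extended complex numbers), determining two disjoint geodesic lines $(w_1,w_2)$ and $(w_3,w_4)$. Then the hyperbolic distance $d$ between the two geodesics satisfies $\cosh d = \frac{1 + |[w_1,w_2;w_3,w_4]|}{|1 - [w_1,w_2;w_3,w_4]|}$, where $[w_1,w_2;w_3,w_4] = \frac{(w_1-w_3)(w_2-w_4)}{(w_1-w_4)(w_2-w_3)}$ is the cross-ratio. -/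
open OnePoint

/-- cosh of the hyperbolic distance between two points of the upper
half-space model of `ℍ³`; a point is a pair `(z, t)` with `z : ℂ` and
height `t > 0`. -/
noncomputable def coshD (p q : ℂ × ℝ) : ℝ :=
  1 + (‖p.1 - q.1‖ ^ 2 + (p.2 - q.2) ^ 2) / (2 * p.2 * q.2)

/-- The geodesic of the upper half-space model with the given pair of
(distinct) endpoints in `ℂ ∪ {∞}`: a vertical line if one endpoint is `∞`,
otherwise the semicircle over the segment joining the two endpoints. -/
noncomputable def geodesicUHS : OnePoint ℂ → OnePoint ℂ → Set (ℂ × ℝ)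
  | OnePoint.infty, OnePoint.infty => ∅
  | OnePoint.infty, (b : ℂ) => {p | 0 < p.2 ∧ p.1 = b}
  | (a : ℂ), OnePoint.infty => {p | 0 < p.2 ∧ p.1 = a}
  | (a : ℂ), (b : ℂ) =>
      {p | 0 < p.2 ∧ (∃ s : ℝ, p.1 = a + (s : ℂ) * (b - a)) ∧
        ‖p.1 - (a + b) / 2‖ ^ 2 + p.2 ^ 2 = ‖b - a‖ ^ 2 / 4}

/-- The inverse hyperbolic cosine. -/
noncomputable def arcosh (x : ℝ) : ℝ := Real.log (x + Real.sqrt (x ^ 2 - 1))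

noncomputable def geodDist (S T : Set (ℂ × ℝ)) : ℝ :=
  sInf {d : ℝ | ∃ p ∈ S, ∃ q ∈ T, d = arcosh (coshD p q)}

/-- Auxiliary: the finite value of an extended complex number (junk value `0` at `∞`). -/
noncomputable def fv : OnePoint ℂ → ℂ
  | OnePoint.infty => 0
  | (a : ℂ) => a

open Classical in
/-- The cross-ratio `[w₁,w₂;w₃,w₄]` of four extended complex numbers (at most one
of which is `∞` when they are pairwise distinct). -/
noncomputable def crossRatio (w1 w2 w3 w4 : OnePoint ℂ) : ℂ :=
  if w1 = OnePoint.infty then (fv w2 - fv w4) / (fv w2 - fv w3)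
  else if w2 = OnePoint.infty then (fv w1 - fv w3) / (fv w1 - fv w4)
  else if w3 = OnePoint.infty then (fv w2 - fv w4) / (fv w1 - fv w4)
  else if w4 = OnePoint.infty then (fv w1 - fv w3) / (fv w2 - fv w3)
  else ((fv w1 - fv w3) * (fv w2 - fv w4)) / ((fv w1 - fv w4) * (fv w2 - fv w3))

/-!
Translations `(z, t) ↦ (z + b, t)` and the inversion `(z, t) ↦ (conj z, t) / (‖z‖² + t²)` preserve
`coshD`; on the boundary they act as `z ↦ z + b` and `z ↦ z⁻¹`, which preserve the cross-ratio.
They reduce every configuration to the vertical axis over `0` against the semicircle over `c, d`.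
For `(0, t)` on the axis and a point of the semicircle over `c + σ (d - c)` at height `s`,
`coshD = ((1 - σ) ‖c‖² + σ ‖d‖² + t²) / (2 t s)`; AM-GM in `t` and a completed square in `σ` bound
this below by `(‖c‖ + ‖d‖) / ‖c - d‖`, with equality at `σ = ‖c‖ / (‖c‖ + ‖d‖)`, `t² = ‖c‖ ‖d‖`.
-/

open Set

theorem cosh_geodDist_of_isLeast {S T : Set (ℂ × ℝ)} {K : ℝ}
    (hK : IsLeast (image2 coshD S T) K) (hK1 : 1 ≤ K) :
    Real.cosh (geodDist S T) = K := by
  have hmono : MonotoneOn Real.arcosh (image2 coshD S T) := fun x hx y hy hxy =>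
    (Real.arcosh_le_arcosh (by linarith [hK.2 hx]) (by linarith [hK.2 hy])).2 hxy
  have hset : {d | ∃ p ∈ S, ∃ q ∈ T, d = arcosh (coshD p q)} =
      Real.arcosh '' image2 coshD S T := by
    ext d
    simp only [mem_ofPred_eq, mem_image, mem_image2]
    constructor
    · rintro ⟨p, hp, q, hq, rfl⟩
      exact ⟨_, ⟨p, hp, q, hq, rfl⟩, rfl⟩
    · rintro ⟨_, ⟨p, hp, q, hq, rfl⟩, rfl⟩
      exact ⟨p, hp, q, hq, rfl⟩
  rw [geodDist, hset, (hmono.map_isLeast hK).csInf_eq, Real.cosh_arcosh hK1]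

theorem coshD_comm (p q : ℂ × ℝ) : coshD p q = coshD q p := by
  rw [coshD, coshD, norm_sub_rev]
  ring

theorem geodDist_comm (S T : Set (ℂ × ℝ)) : geodDist S T = geodDist T S := by
  unfold geodDist
  congr 1
  ext d
  constructor <;> rintro ⟨p, hp, q, hq, rfl⟩ <;> exact ⟨q, hq, p, hp, by rw [coshD_comm]⟩

theorem geodDist_image {F : ℂ × ℝ → ℂ × ℝ} {S T : Set (ℂ × ℝ)}
    (hF : ∀ p ∈ S, ∀ q ∈ T, coshD (F p) (F q) = coshD p q) :
    geodDist (F '' S) (F '' T) = geodDist S T := by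
  unfold geodDist
  congr 1
  ext d
  simp only [mem_ofPred_eq, exists_mem_image]
  constructor <;> rintro ⟨p, hp, q, hq, rfl⟩ <;> exact ⟨p, hp, q, hq, by rw [hF p hp q hq]⟩

theorem pos_of_mem_geodesicUHS {w w' : OnePoint ℂ} {p : ℂ × ℝ} (hp : p ∈ geodesicUHS w w') :
    0 < p.2 := by
  induction w using OnePoint.rec <;> induction w' using OnePoint.rec <;>
    first | exact absurd hp (Set.notMem_empty p) | exact hp.1

theorem norm_sub_midpoint_sq (c d : ℂ) (σ : ℝ) :
    ‖c + σ * (d - c) - (c + d) / 2‖ ^ 2 = (σ - 1 / 2) ^ 2 * ‖d - c‖ ^ 2 := by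
  rw [show c + σ * (d - c) - (c + d) / 2 = ((σ - 1 / 2 : ℝ) : ℂ) * (d - c) by push_cast; ring,
    norm_mul, mul_pow, Complex.norm_real, Real.norm_eq_abs, sq_abs]

theorem mem_geodesicUHS_coe_coe {c d : ℂ} {p : ℂ × ℝ} :
    p ∈ geodesicUHS c d ↔
      0 < p.2 ∧ ∃ σ : ℝ, p.1 = c + σ * (d - c) ∧ p.2 ^ 2 = σ * (1 - σ) * ‖d - c‖ ^ 2 := by
  change (0 < p.2 ∧ (∃ σ : ℝ, p.1 = c + σ * (d - c)) ∧ _) ↔ _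
  constructor
  · rintro ⟨ht, ⟨σ, hz⟩, hcirc⟩
    rw [hz, norm_sub_midpoint_sq] at hcirc
    exact ⟨ht, σ, hz, by linarith⟩
  · rintro ⟨ht, σ, hz, ht2⟩
    refine ⟨ht, ⟨σ, hz⟩, ?_⟩
    rw [hz, norm_sub_midpoint_sq]
    linarith

theorem mem_geodesicUHS_coe_infty {a : ℂ} {p : ℂ × ℝ} :
    p ∈ geodesicUHS a ∞ ↔ 0 < p.2 ∧ p.1 = a :=
  Iff.rfl

theorem norm_add_mul_sub_sq (c d : ℂ) (σ : ℝ) :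
    ‖c + σ * (d - c)‖ ^ 2 = (1 - σ) * ‖c‖ ^ 2 + σ * ‖d‖ ^ 2 - σ * (1 - σ) * ‖d - c‖ ^ 2 := by
  simp only [Complex.sq_norm, Complex.normSq_apply, Complex.add_re, Complex.add_im,
    Complex.mul_re, Complex.mul_im, Complex.sub_re, Complex.sub_im, Complex.ofReal_re,
    Complex.ofReal_im]
  ring

def translateUHS (b : ℂ) (p : ℂ × ℝ) : ℂ × ℝ := (p.1 + b, p.2)

theorem coshD_translateUHS (b : ℂ) (p q : ℂ × ℝ) :
    coshD (translateUHS b p) (translateUHS b q) = coshD p q := by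
  simp only [coshD, translateUHS, add_sub_add_right_eq_sub]

theorem image_translateUHS_eq_preimage (b : ℂ) (X : Set (ℂ × ℝ)) :
    translateUHS b '' X = translateUHS (-b) ⁻¹' X :=
  congrFun (image_eq_preimage_of_inverse (fun p => by simp [translateUHS])
    (fun p => by simp [translateUHS])) X

theorem image_translateUHS_vertical (a b : ℂ) :
    translateUHS b '' geodesicUHS a ∞ = geodesicUHS ↑(a + b) ∞ := by
  ext p
  simp only [image_translateUHS_eq_preimage, mem_preimage, mem_geodesicUHS_coe_infty, translateUHS,
    ← sub_eq_add_neg, sub_eq_iff_eq_add]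

theorem image_translateUHS_semicircle (a c b : ℂ) :
    translateUHS b '' geodesicUHS a c = geodesicUHS ↑(a + b) ↑(c + b) := by
  ext p
  simp only [image_translateUHS_eq_preimage, mem_preimage, mem_geodesicUHS_coe_coe, translateUHS,
    ← sub_eq_add_neg, sub_eq_iff_eq_add, add_sub_add_right_eq_sub, add_right_comm a _ b]

/-- Inversion in the unit sphere followed by the reflection `(z, t) ↦ (conj z, t)`;
on the boundary `ℂ` it is `z ↦ z⁻¹`. -/
noncomputable def invertUHS (p : ℂ × ℝ) : ℂ × ℝ :=
  (starRingEnd ℂ p.1 / ((‖p.1‖ ^ 2 + p.2 ^ 2 : ℝ) : ℂ), p.2 / (‖p.1‖ ^ 2 + p.2 ^ 2))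

theorem invertUHS_invertUHS {p : ℂ × ℝ} (hp : 0 < p.2) : invertUHS (invertUHS p) = p := by
  have hN : 0 < ‖p.1‖ ^ 2 + p.2 ^ 2 := by positivity
  obtain ⟨⟨x, y⟩, t⟩ := p
  simp only [invertUHS, Prod.mk.injEq, Complex.ext_iff, Complex.sq_norm, Complex.normSq_apply,
    Complex.div_ofReal_re, Complex.div_ofReal_im, Complex.conj_re, Complex.conj_im] at hN ⊢
  refine ⟨⟨?_, ?_⟩, ?_⟩ <;> field_simp

theorem coshD_invertUHS {p q : ℂ × ℝ} (hp : 0 < p.2) (hq : 0 < q.2) :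
    coshD (invertUHS p) (invertUHS q) = coshD p q := by
  have hNp : 0 < ‖p.1‖ ^ 2 + p.2 ^ 2 := by positivity
  have hNq : 0 < ‖q.1‖ ^ 2 + q.2 ^ 2 := by positivity
  obtain ⟨⟨x, y⟩, t⟩ := p
  obtain ⟨⟨x', y'⟩, s⟩ := q
  simp only [coshD, invertUHS, Complex.sq_norm, Complex.normSq_apply, Complex.sub_re,
    Complex.sub_im, Complex.div_ofReal_re, Complex.div_ofReal_im, Complex.conj_re,
    Complex.conj_im] at hNp hNq hp hq ⊢
  field_simp
  ring

theorem mapsTo_invertUHS_semicircle {c d : ℂ} (hc : c ≠ 0) (hd : d ≠ 0) :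
    MapsTo invertUHS (geodesicUHS c d) (geodesicUHS ↑c⁻¹ ↑d⁻¹) := by
  intro p hp
  obtain ⟨ht, σ, hz, ht2⟩ := mem_geodesicUHS_coe_coe.1 hp
  have hN : ‖p.1‖ ^ 2 + p.2 ^ 2 = (1 - σ) * ‖c‖ ^ 2 + σ * ‖d‖ ^ 2 := by
    rw [hz, norm_add_mul_sub_sq, ht2]; ring
  have hNpos : 0 < (1 - σ) * ‖c‖ ^ 2 + σ * ‖d‖ ^ 2 := by rw [← hN]; positivity
  have hc' : ‖c‖ ≠ 0 := norm_ne_zero_iff.2 hc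
  have hd' : ‖d‖ ≠ 0 := norm_ne_zero_iff.2 hd
  refine mem_geodesicUHS_coe_coe.2 ⟨?_, σ * ‖d‖ ^ 2 / ((1 - σ) * ‖c‖ ^ 2 + σ * ‖d‖ ^ 2), ?_, ?_⟩ <;>
    simp only [invertUHS, hN]
  · exact div_pos ht hNpos
  · have hNc : ((1 - σ) * ‖c‖ ^ 2 + σ * ‖d‖ ^ 2 : ℂ) ≠ 0 := by exact_mod_cast hNpos.ne'
    have hc'' : (‖c‖ : ℂ) ≠ 0 := by exact_mod_cast hc'
    have hd'' : (‖d‖ : ℂ) ≠ 0 := by exact_mod_cast hd'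
    rw [Complex.inv_def, Complex.inv_def, hz, ← Complex.sq_norm, ← Complex.sq_norm]
    simp only [map_add, map_mul, map_sub, Complex.conj_ofReal]
    push_cast
    field_simp
    ring
  · have hinv : ‖d⁻¹ - c⁻¹‖ = ‖d - c‖ / (‖c‖ * ‖d‖) := by
      rw [inv_sub_inv hd hc, norm_div, norm_mul, norm_sub_rev, mul_comm ‖d‖]
    rw [hinv, div_pow, ht2]
    field_simp
    ring

theorem mapsTo_invertUHS_semicircle_zero {a : ℂ} (ha : a ≠ 0) :
    MapsTo invertUHS (geodesicUHS a ↑(0 : ℂ)) (geodesicUHS ↑a⁻¹ ∞) := by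
  intro p hp
  obtain ⟨ht, σ, hz, ht2⟩ := mem_geodesicUHS_coe_coe.1 hp
  have hN : ‖p.1‖ ^ 2 + p.2 ^ 2 = (1 - σ) * ‖a‖ ^ 2 := by
    rw [hz, norm_add_mul_sub_sq, ht2]; simp only [norm_zero, zero_sub, norm_neg]; ring
  have hNpos : 0 < (1 - σ) * ‖a‖ ^ 2 := by rw [← hN]; positivity
  have hσ : (1 - σ : ℂ) ≠ 0 := by exact_mod_cast (pos_of_mul_pos_left hNpos (by positivity)).ne'
  have ha' : (‖a‖ : ℂ) ≠ 0 := by exact_mod_cast norm_ne_zero_iff.2 ha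
  refine mem_geodesicUHS_coe_infty.2 ⟨?_, ?_⟩ <;> simp only [invertUHS, hN]
  · exact div_pos ht hNpos
  · rw [Complex.inv_def, hz, ← Complex.sq_norm]
    simp only [map_add, map_mul, map_sub, Complex.conj_ofReal, map_zero]
    push_cast
    field_simp
    ring

theorem mapsTo_invertUHS_vertical {a : ℂ} (ha : a ≠ 0) :
    MapsTo invertUHS (geodesicUHS a ∞) (geodesicUHS ↑a⁻¹ ↑(0 : ℂ)) := by
  rintro p ⟨ht, hz⟩
  have hNpos : 0 < ‖a‖ ^ 2 + p.2 ^ 2 := by positivity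
  have ha' : ‖a‖ ≠ 0 := norm_ne_zero_iff.2 ha
  refine mem_geodesicUHS_coe_coe.2 ⟨?_, p.2 ^ 2 / (‖a‖ ^ 2 + p.2 ^ 2), ?_, ?_⟩ <;>
    simp only [invertUHS, hz]
  · exact div_pos ht hNpos
  · have hNc : ((‖a‖ ^ 2 + p.2 ^ 2 : ℝ) : ℂ) ≠ 0 := by exact_mod_cast hNpos.ne'
    have ha'' : (‖a‖ : ℂ) ≠ 0 := by exact_mod_cast ha'
    rw [Complex.inv_def, ← Complex.sq_norm]
    push_cast at hNc ⊢
    field_simp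
    ring
  · rw [zero_sub, norm_neg, norm_inv]
    field_simp
    ring

theorem image_invertUHS_of_mapsTo {w₁ w₂ w₃ w₄ : OnePoint ℂ}
    (h : MapsTo invertUHS (geodesicUHS w₁ w₂) (geodesicUHS w₃ w₄))
    (h' : MapsTo invertUHS (geodesicUHS w₃ w₄) (geodesicUHS w₁ w₂)) :
    invertUHS '' geodesicUHS w₁ w₂ = geodesicUHS w₃ w₄ :=
  (InvOn.bijOn ⟨fun _ hp => invertUHS_invertUHS (pos_of_mem_geodesicUHS hp),
    fun _ hp => invertUHS_invertUHS (pos_of_mem_geodesicUHS hp)⟩ h h').image_eq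

theorem image_invertUHS_semicircle {c d : ℂ} (hc : c ≠ 0) (hd : d ≠ 0) :
    invertUHS '' geodesicUHS c d = geodesicUHS ↑c⁻¹ ↑d⁻¹ :=
  image_invertUHS_of_mapsTo (mapsTo_invertUHS_semicircle hc hd)
    (by simpa using mapsTo_invertUHS_semicircle (inv_ne_zero hc) (inv_ne_zero hd))

theorem image_invertUHS_vertical {a : ℂ} (ha : a ≠ 0) :
    invertUHS '' geodesicUHS a ∞ = geodesicUHS ↑a⁻¹ ↑(0 : ℂ) :=
  image_invertUHS_of_mapsTo (mapsTo_invertUHS_vertical ha)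
    (by simpa using mapsTo_invertUHS_semicircle_zero (inv_ne_zero ha))

theorem coshD_vertical_zero_semicircle {c d : ℂ} {p q : ℂ × ℝ} {σ : ℝ}
    (hp : p ∈ geodesicUHS ↑(0 : ℂ) ∞) (hq : q.2 ≠ 0) (hz : q.1 = c + σ * (d - c))
    (ht : q.2 ^ 2 = σ * (1 - σ) * ‖d - c‖ ^ 2) :
    coshD p q = ((1 - σ) * ‖c‖ ^ 2 + σ * ‖d‖ ^ 2 + p.2 ^ 2) / (2 * p.2 * q.2) := by
  obtain ⟨hp₀, hp1⟩ := mem_geodesicUHS_coe_infty.1 hp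
  rw [coshD, hp1, zero_sub, norm_neg, hz, norm_add_mul_sub_sq, ← ht]
  field_simp
  ring

theorem le_coshD_vertical_zero_semicircle {c d : ℂ} (hcd : c ≠ d) {p q : ℂ × ℝ}
    (hp : p ∈ geodesicUHS ↑(0 : ℂ) ∞) (hq : q ∈ geodesicUHS c d) :
    (‖c‖ + ‖d‖) / ‖c - d‖ ≤ coshD p q := by
  obtain ⟨hs, σ, hz, hs2⟩ := mem_geodesicUHS_coe_coe.1 hq
  have ht : 0 < p.2 := hp.1
  rw [coshD_vertical_zero_semicircle hp hs.ne' hz hs2, div_le_div_iff₀ (by simpa [sub_eq_zero])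
    (by positivity), norm_sub_rev c d]
  set M := (1 - σ) * ‖c‖ ^ 2 + σ * ‖d‖ ^ 2
  have hM : 0 ≤ M := by
    have := norm_add_mul_sub_sq c d σ
    nlinarith [sq_nonneg ‖c + σ * (d - c)‖]
  -- `M - (‖c‖ + ‖d‖)² σ (1 - σ) = ((1 - σ) ‖c‖ - σ ‖d‖)²`, and AM-GM for `M + p.2²`
  have key : ((‖c‖ + ‖d‖) * (2 * p.2 * q.2)) ^ 2 ≤ ((M + p.2 ^ 2) * ‖d - c‖) ^ 2 := by
    have h1 : (‖c‖ + ‖d‖) ^ 2 * q.2 ^ 2 ≤ M * ‖d - c‖ ^ 2 := by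
      rw [hs2]
      nlinarith [sq_nonneg ((1 - σ) * ‖c‖ - σ * ‖d‖), sq_nonneg ‖d - c‖]
    nlinarith [sq_nonneg (M - p.2 ^ 2), sq_nonneg ‖d - c‖, sq_nonneg p.2]
  exact (pow_le_pow_iff_left₀ (by positivity) (by positivity) two_ne_zero).1 key

theorem exists_coshD_vertical_zero_semicircle_eq {c d : ℂ} (hc : c ≠ 0) (hd : d ≠ 0)
    (hcd : c ≠ d) :
    ∃ p ∈ geodesicUHS ↑(0 : ℂ) ∞, ∃ q ∈ geodesicUHS c d,
      coshD p q = (‖c‖ + ‖d‖) / ‖c - d‖ := by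
  have hA : 0 < ‖c‖ := norm_pos_iff.2 hc
  have hB : 0 < ‖d‖ := norm_pos_iff.2 hd
  have hE : 0 < ‖d - c‖ := norm_pos_iff.2 (sub_ne_zero.2 hcd.symm)
  -- the common perpendicular meets the axis at height `√(‖c‖‖d‖)`
  set g := √(‖c‖ * ‖d‖)
  have hg : g ^ 2 = ‖c‖ * ‖d‖ := Real.sq_sqrt (by positivity)
  have hg0 : 0 < g := Real.sqrt_pos.2 (by positivity)
  set σ := ‖c‖ / (‖c‖ + ‖d‖)
  set s := ‖d - c‖ * g / (‖c‖ + ‖d‖)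
  have hs2 : s ^ 2 = σ * (1 - σ) * ‖d - c‖ ^ 2 := by
    simp only [s, σ, div_pow, mul_pow, hg]
    field_simp
    ring
  have hp : ((0 : ℂ), g) ∈ geodesicUHS ↑(0 : ℂ) ∞ := ⟨hg0, rfl⟩
  refine ⟨_, hp, (c + σ * (d - c), s),
    mem_geodesicUHS_coe_coe.2 ⟨by positivity, σ, rfl, hs2⟩, ?_⟩
  rw [coshD_vertical_zero_semicircle hp (by positivity) rfl hs2, norm_sub_rev]
  simp only [s, σ]
  field_simp
  rw [hg]
  ring

theorem cosh_geodDist_vertical_zero_semicircle {c d : ℂ} (hc : c ≠ 0) (hd : d ≠ 0)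
    (hcd : c ≠ d) :
    Real.cosh (geodDist (geodesicUHS ↑(0 : ℂ) ∞) (geodesicUHS c d)) =
      (‖c‖ + ‖d‖) / ‖c - d‖ := by
  obtain ⟨p, hp, q, hq, hpq⟩ := exists_coshD_vertical_zero_semicircle_eq hc hd hcd
  refine cosh_geodDist_of_isLeast ⟨⟨p, hp, q, hq, hpq⟩, ?_⟩ ?_
  · rintro _ ⟨p, hp, q, hq, rfl⟩
    exact le_coshD_vertical_zero_semicircle hcd hp hq
  · rw [one_le_div (norm_pos_iff.2 (sub_ne_zero.2 hcd))]
    exact norm_sub_le c d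

theorem one_add_norm_div_norm_one_sub_inv (z : ℂ) :
    (1 + ‖z⁻¹‖) / ‖1 - z⁻¹‖ = (1 + ‖z‖) / ‖1 - z‖ := by
  rcases eq_or_ne z 0 with rfl | hz
  · simp
  rw [show 1 - z⁻¹ = -((1 - z) / z) by field_simp; ring, norm_neg, norm_div, norm_inv,
    div_div_eq_mul_div, add_mul, inv_mul_cancel₀ (norm_ne_zero_iff.2 hz), one_mul, add_comm]

theorem one_add_norm_div_norm_one_sub_div (u v x : ℂ) (hux : u ≠ x) :
    (1 + ‖(u - v) / (u - x)‖) / ‖1 - (u - v) / (u - x)‖ = (‖u - v‖ + ‖u - x‖) / ‖v - x‖ := by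
  have hux' : u - x ≠ 0 := sub_ne_zero.2 hux
  rw [show 1 - (u - v) / (u - x) = (v - x) / (u - x) by field_simp; ring, norm_div, norm_div,
    one_add_div (norm_ne_zero_iff.2 hux'), div_div_div_cancel_right₀ (norm_ne_zero_iff.2 hux'),
    add_comm]

theorem cosh_geodDist_vertical_semicircle {a c d : ℂ} (hac : a ≠ c) (had : a ≠ d)
    (hcd : c ≠ d) :
    Real.cosh (geodDist (geodesicUHS a ∞) (geodesicUHS c d)) =
      (1 + ‖(a - c) / (a - d)‖) / ‖1 - (a - c) / (a - d)‖ := by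
  have hv := image_translateUHS_vertical 0 a
  have hs := image_translateUHS_semicircle (c - a) (d - a) a
  rw [zero_add] at hv
  rw [sub_add_cancel, sub_add_cancel] at hs
  rw [← hv, ← hs, geodDist_image fun p _ q _ => coshD_translateUHS a p q,
    cosh_geodDist_vertical_zero_semicircle (sub_ne_zero.2 hac.symm) (sub_ne_zero.2 had.symm)
      (sub_left_injective.ne hcd), one_add_norm_div_norm_one_sub_div a c d had,
    sub_sub_sub_cancel_right, norm_sub_rev c, norm_sub_rev d]

theorem cosh_geodDist_semicircle_vertical {a b c : ℂ} (hab : a ≠ b) (hac : a ≠ c)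
    (hbc : b ≠ c) :
    Real.cosh (geodDist (geodesicUHS a b) (geodesicUHS c ∞)) =
      (1 + ‖(a - c) / (b - c)‖) / ‖1 - (a - c) / (b - c)‖ := by
  rw [geodDist_comm, cosh_geodDist_vertical_semicircle hac.symm hbc.symm hab, ← neg_sub a c,
    ← neg_sub b c, neg_div_neg_eq]

theorem cosh_geodDist_semicircle_semicircle {a b c d : ℂ} (hab : a ≠ b) (hac : a ≠ c)
    (had : a ≠ d) (hbc : b ≠ c) (hbd : b ≠ d) (hcd : c ≠ d) :
    Real.cosh (geodDist (geodesicUHS a b) (geodesicUHS c d)) =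
      (1 + ‖(a - c) * (b - d) / ((a - d) * (b - c))‖) /
        ‖1 - (a - c) * (b - d) / ((a - d) * (b - c))‖ := by
  have hab' : a - b ≠ 0 := sub_ne_zero.2 hab
  have hcb : c - b ≠ 0 := sub_ne_zero.2 hbc.symm
  have hdb : d - b ≠ 0 := sub_ne_zero.2 hbd.symm
  -- translate `b` to `0` and invert, sending `b` to `∞`
  have h₁ : geodesicUHS a b = translateUHS b '' (invertUHS '' geodesicUHS ↑(a - b)⁻¹ ∞) := by
    rw [image_invertUHS_vertical (inv_ne_zero hab'), inv_inv, image_translateUHS_semicircle,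
      sub_add_cancel, zero_add]
  have h₂ : geodesicUHS c d =
      translateUHS b '' (invertUHS '' geodesicUHS ↑(c - b)⁻¹ ↑(d - b)⁻¹) := by
    rw [image_invertUHS_semicircle (inv_ne_zero hcb) (inv_ne_zero hdb), inv_inv, inv_inv,
      image_translateUHS_semicircle, sub_add_cancel, sub_add_cancel]
  have hinj : ∀ {x y : ℂ}, x ≠ y → (x - b)⁻¹ ≠ (y - b)⁻¹ := fun h =>
    (inv_injective.comp (sub_left_injective (b := b))).ne h
  have hcr : ((a - b)⁻¹ - (c - b)⁻¹) / ((a - b)⁻¹ - (d - b)⁻¹) =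
      (a - c) * (b - d) / ((a - d) * (b - c)) := by
    have hda : d - a ≠ 0 := sub_ne_zero.2 had.symm
    rw [inv_sub_inv hab' hcb, inv_sub_inv hab' hdb, sub_sub_sub_cancel_right,
      sub_sub_sub_cancel_right]
    field_simp
    ring
  rw [h₁, h₂, geodDist_image fun p _ q _ => coshD_translateUHS b p q,
    geodDist_image fun p hp q hq =>
      coshD_invertUHS (pos_of_mem_geodesicUHS hp) (pos_of_mem_geodesicUHS hq),
    cosh_geodDist_vertical_semicircle (hinj hac) (hinj had) (hinj hcd), hcr]

theorem cosh_dist_eq_crossRatio_general (w1 w2 w3 w4 : OnePoint ℂ)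
    (h12 : w1 ≠ w2) (h13 : w1 ≠ w3) (h14 : w1 ≠ w4)
    (h23 : w2 ≠ w3) (h24 : w2 ≠ w4) (h34 : w3 ≠ w4) :
    Real.cosh (geodDist (geodesicUHS w1 w2) (geodesicUHS w3 w4)) =
      (1 + ‖crossRatio w1 w2 w3 w4‖) /
        ‖1 - crossRatio w1 w2 w3 w4‖ := by
  induction w1 using OnePoint.rec <;> induction w2 using OnePoint.rec <;>
    induction w3 using OnePoint.rec <;> induction w4 using OnePoint.rec <;>
    simp only [ne_eq, not_true_eq_false, OnePoint.coe_eq_coe, OnePoint.infty_ne_coe,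
      OnePoint.coe_ne_infty, not_false_eq_true] at h12 h13 h14 h23 h24 h34
  case infty.coe.coe.coe a c d =>
    rw [show geodesicUHS ∞ a = geodesicUHS a ∞ from rfl,
      cosh_geodDist_vertical_semicircle h23 h24 h34, ← one_add_norm_div_norm_one_sub_inv]
    simp [crossRatio, fv]
  case coe.infty.coe.coe a c d =>
    rw [cosh_geodDist_vertical_semicircle h13 h14 h34]
    simp [crossRatio, fv]
  case coe.coe.infty.coe a b d =>
    rw [show geodesicUHS ∞ d = geodesicUHS d ∞ from rfl,
      cosh_geodDist_semicircle_vertical h12 h14 h24, ← one_add_norm_div_norm_one_sub_inv]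
    simp [crossRatio, fv]
  case coe.coe.coe.infty a b c =>
    rw [cosh_geodDist_semicircle_vertical h12 h13 h23]
    simp [crossRatio, fv]
  case coe.coe.coe.coe a b c d =>
    rw [cosh_geodDist_semicircle_semicircle h12 h13 h14 h23 h24 h34]
    simp [crossRatio, fv]

/-- The hyperbolic distance `d` between the disjoint geodesics `(w₁,w₂)` and `(w₃,w₄)`
satisfies `cosh d = (1 + |[w₁,w₂;w₃,w₄]|) / |1 - [w₁,w₂;w₃,w₄]|`. -/
theorem cosh_dist_eq_crossRatio (w1 w2 w3 w4 : OnePoint ℂ)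
    (h12 : w1 ≠ w2) (h13 : w1 ≠ w3) (h14 : w1 ≠ w4)
    (h23 : w2 ≠ w3) (h24 : w2 ≠ w4) (h34 : w3 ≠ w4)
    (hdisj : Disjoint (geodesicUHS w1 w2) (geodesicUHS w3 w4)) :
    Real.cosh (geodDist (geodesicUHS w1 w2) (geodesicUHS w3 w4)) =
      (1 + ‖crossRatio w1 w2 w3 w4‖) /
        ‖1 - crossRatio w1 w2 w3 w4‖ :=
  cosh_dist_eq_crossRatio_general w1 w2 w3 w4 h12 h13 h14 h23 h24 h34
end

section
/- In the special case $w_1 = -1$, $w_2 = 1$, $w_3 = -w$, $w_4 = w$ for $w \in \mathbb{C}$ with $w \neq \pm 1$, $w \neq 0$, the hyperbolic distance $d$ between the geodesic with endpoints $-1,1$ and the geodesic with endpoints $-w,w$ in the upper half-space model satisfies $\cosh d = \frac{1 + |\lambda|}{|1-\lambda|}$ where $\lambda = \frac{(-1+w)(1-w)}{(-1-w)(1+w)}$. -/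
open OnePoint

/-!
Both geodesics lie on hemispheres centred at the origin: the one with endpoints `±1` on
`‖z‖² + t² = 1`, the one with endpoints `±w` on `‖z‖² + t² = ‖w‖²`. Between two such concentric
hemispheres of radii `r, R` the function `cosh d` is minimised on the vertical axis, with value
`(r² + R²) / (2rR)`: writing `coshD p q = (r² + R² - 2⟪z, z'⟫) / (2tt')`, this is AM-GM
`2rR ≤ r² + R²` together with the Cauchy–Schwarz bounds `⟪z, z'⟫ ≤ ‖z‖‖z'‖ ≤ rR - tt'`.
Both geodesics meet the axis, at `(0, 1)` and `(0, ‖w‖)`, so `cosh d = (1 + ‖w‖²) / (2‖w‖)`.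
On the cross-ratio side `λ = ((1 - w) / (1 + w))²` and `1 - λ = 4w / (1 + w)²`, and the
parallelogram law `‖1 - w‖² + ‖1 + w‖² = 2 + 2‖w‖²` gives the same value.
-/

open RealInnerProductSpace

lemma arcosh_eq_real_arcosh : arcosh = Real.arcosh := rfl

lemma cosh_geodDist_eq {S T : Set (ℂ × ℝ)} {c : ℝ} (hc : 1 ≤ c)
    (hle : ∀ p ∈ S, ∀ q ∈ T, c ≤ coshD p q) (hattained : ∃ p ∈ S, ∃ q ∈ T, coshD p q = c) :
    Real.cosh (geodDist S T) = c := by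
  obtain ⟨p, hp, q, hq, hpq⟩ := hattained
  have hc0 : 0 < c := by linarith
  have hmem : arcosh c ∈ {d : ℝ | ∃ p ∈ S, ∃ q ∈ T, d = arcosh (coshD p q)} :=
    ⟨p, hp, q, hq, by rw [hpq]⟩
  have hlower : arcosh c ∈ lowerBounds {d : ℝ | ∃ p ∈ S, ∃ q ∈ T, d = arcosh (coshD p q)} := by
    rintro _ ⟨p, hp, q, hq, rfl⟩
    have hpq := hle p hp q hq
    exact (Real.arcosh_le_arcosh hc0 (hc0.trans_le hpq)).2 hpq
  have hdist : geodDist S T = arcosh c :=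
    le_antisymm (csInf_le ⟨_, hlower⟩ hmem) (le_csInf ⟨_, hmem⟩ hlower)
  rw [hdist, arcosh_eq_real_arcosh, Real.cosh_arcosh hc]

lemma mul_add_mul_le_of_sq_add_sq_eq {t a r t' b R : ℝ} (hr : 0 ≤ r) (hR : 0 ≤ R)
    (h : t ^ 2 + a ^ 2 = r ^ 2) (h' : t' ^ 2 + b ^ 2 = R ^ 2) : t * t' + a * b ≤ r * R := by
  have hsq : (t * t' + a * b) ^ 2 ≤ (r * R) ^ 2 := by
    nlinarith [sq_nonneg (t * b - a * t')]
  exact abs_le_of_sq_le_sq' hsq (by positivity) |>.2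

lemma coshD_eq_of_norm_sq_add_sq {r R : ℝ} {p q : ℂ × ℝ} (hp2 : 0 < p.2) (hq2 : 0 < q.2)
    (hp : ‖p.1‖ ^ 2 + p.2 ^ 2 = r ^ 2) (hq : ‖q.1‖ ^ 2 + q.2 ^ 2 = R ^ 2) :
    coshD p q = (r ^ 2 + R ^ 2 - 2 * ⟪p.1, q.1⟫) / (2 * p.2 * q.2) := by
  rw [coshD, norm_sub_sq_real]
  field_simp
  linear_combination hp + hq

lemma div_le_coshD_of_norm_sq_add_sq {r R : ℝ} (hr : 0 < r) (hR : 0 < R) {p q : ℂ × ℝ}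
    (hp2 : 0 < p.2) (hq2 : 0 < q.2)
    (hp : ‖p.1‖ ^ 2 + p.2 ^ 2 = r ^ 2) (hq : ‖q.1‖ ^ 2 + q.2 ^ 2 = R ^ 2) :
    (r ^ 2 + R ^ 2) / (2 * r * R) ≤ coshD p q := by
  have hamgm : 2 * r * R ≤ r ^ 2 + R ^ 2 := by nlinarith [sq_nonneg (r - R)]
  have hcs : p.2 * q.2 + ‖p.1‖ * ‖q.1‖ ≤ r * R :=
    mul_add_mul_le_of_sq_add_sq_eq hr.le hR.le (by linarith) (by linarith)
  have hinner : ⟪p.1, q.1⟫ ≤ r * R - p.2 * q.2 := by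
    linarith [real_inner_le_norm p.1 q.1]
  have hgap : 0 ≤ r * R - p.2 * q.2 := by
    linarith [mul_nonneg (norm_nonneg p.1) (norm_nonneg q.1)]
  rw [coshD_eq_of_norm_sq_add_sq hp2 hq2 hp hq, div_le_div_iff₀ (by positivity) (by positivity)]
  nlinarith [mul_le_mul_of_nonneg_right hamgm hgap,
    mul_le_mul_of_nonneg_left hinner (by positivity : 0 ≤ 2 * r * R)]

lemma norm_sq_add_sq_of_mem_geodesicUHS_neg {a : ℂ} {p : ℂ × ℝ}
    (hp : p ∈ geodesicUHS ((-a : ℂ) : OnePoint ℂ) (a : OnePoint ℂ)) :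
    ‖p.1‖ ^ 2 + p.2 ^ 2 = ‖a‖ ^ 2 := by
  obtain ⟨-, -, hsphere⟩ := hp
  rw [show (-a + a) / 2 = 0 by ring, sub_zero, show a - -a = 2 * a by ring, norm_mul,
    Complex.norm_two] at hsphere
  linarith

lemma zero_mk_norm_mem_geodesicUHS_neg {a : ℂ} (ha : a ≠ 0) :
    ((0 : ℂ), ‖a‖) ∈ geodesicUHS ((-a : ℂ) : OnePoint ℂ) (a : OnePoint ℂ) := by
  refine ⟨norm_pos_iff.2 ha, ⟨1 / 2, by push_cast; ring⟩, ?_⟩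
  rw [show (-a + a) / 2 = 0 by ring, show a - -a = 2 * a by ring, norm_mul, Complex.norm_two]
  simp only [sub_zero, norm_zero]
  ring

lemma coshD_zero_mk {s t : ℝ} (hs : 0 < s) (ht : 0 < t) :
    coshD ((0 : ℂ), s) ((0 : ℂ), t) = (s ^ 2 + t ^ 2) / (2 * s * t) := by
  rw [coshD, sub_zero, norm_zero]
  field_simp
  ring

theorem cosh_geodDist_geodesicUHS_neg {a b : ℂ} (ha : a ≠ 0) (hb : b ≠ 0) :
    Real.cosh (geodDist (geodesicUHS ((-a : ℂ) : OnePoint ℂ) (a : OnePoint ℂ))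
        (geodesicUHS ((-b : ℂ) : OnePoint ℂ) (b : OnePoint ℂ))) =
      (‖a‖ ^ 2 + ‖b‖ ^ 2) / (2 * ‖a‖ * ‖b‖) := by
  have ha' := norm_pos_iff.2 ha
  have hb' := norm_pos_iff.2 hb
  refine cosh_geodDist_eq ?_ ?_ ⟨_, zero_mk_norm_mem_geodesicUHS_neg ha,
    _, zero_mk_norm_mem_geodesicUHS_neg hb, coshD_zero_mk ha' hb'⟩
  · rw [le_div_iff₀ (by positivity)]
    nlinarith [sq_nonneg (‖a‖ - ‖b‖)]
  · intro p hp q hq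
    exact div_le_coshD_of_norm_sq_add_sq ha' hb' hp.1 hq.1
      (norm_sq_add_sq_of_mem_geodesicUHS_neg hp) (norm_sq_add_sq_of_mem_geodesicUHS_neg hq)

lemma one_add_norm_div_norm_one_sub_crossRatio {w : ℂ} (hw : w ≠ -1) (hw0 : w ≠ 0) :
    (1 + ‖((-1 + w) * (1 - w)) / ((-1 - w) * (1 + w))‖) /
        ‖1 - ((-1 + w) * (1 - w)) / ((-1 - w) * (1 + w))‖ =
      (1 + ‖w‖ ^ 2) / (2 * ‖w‖) := by
  have h1w : (1 : ℂ) + w ≠ 0 := fun h => hw (by linear_combination h)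
  have hlam : ((-1 + w) * (1 - w)) / ((-1 - w) * (1 + w)) = (1 - w) ^ 2 / (1 + w) ^ 2 := by
    rw [div_eq_div_iff (mul_ne_zero (by contrapose! h1w; linear_combination -h1w) h1w)
      (pow_ne_zero 2 h1w)]
    ring
  have hone : (1 : ℂ) - (1 - w) ^ 2 / (1 + w) ^ 2 = 4 * w / (1 + w) ^ 2 := by
    field_simp
    ring
  have hparallelogram : ‖1 - w‖ ^ 2 + ‖1 + w‖ ^ 2 = 2 + 2 * ‖w‖ ^ 2 := by
    have h := parallelogram_law_with_norm ℝ (1 : ℂ) w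
    rw [norm_one] at h
    linear_combination h
  have h1w' : 0 < ‖1 + w‖ := norm_pos_iff.2 h1w
  have hw0' : 0 < ‖w‖ := norm_pos_iff.2 hw0
  rw [hlam, hone, norm_div, norm_div, norm_pow, norm_pow, norm_mul,
    show ‖(4 : ℂ)‖ = 4 by norm_num]
  field_simp
  linear_combination 2 * hparallelogram

theorem cosh_dist_special_case_general (w : ℂ) (hw2 : w ≠ -1) (hw0 : w ≠ 0) :
    Real.cosh (geodDist (geodesicUHS ((-1 : ℂ) : OnePoint ℂ) ((1 : ℂ) : OnePoint ℂ))
        (geodesicUHS ((-w : ℂ) : OnePoint ℂ) ((w : ℂ) : OnePoint ℂ))) =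
      (1 + ‖((-1 + w) * (1 - w)) / ((-1 - w) * (1 + w))‖) /
        ‖1 - ((-1 + w) * (1 - w)) / ((-1 - w) * (1 + w))‖ := by
  rw [cosh_geodDist_geodesicUHS_neg one_ne_zero hw0,
    one_add_norm_div_norm_one_sub_crossRatio hw2 hw0, norm_one]
  ring

/-- Special case of the cross-ratio distance formula: the hyperbolic distance `d`
between the geodesic with endpoints `-1, 1` and the geodesic with endpoints `-w, w`
satisfies `cosh d = (1 + |λ|)/|1 - λ|` with `λ = ((-1+w)(1-w))/((-1-w)(1+w))`. -/
theorem cosh_dist_special_case (w : ℂ) (hw1 : w ≠ 1) (hw2 : w ≠ -1) (hw0 : w ≠ 0)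
    (hdisj : Disjoint (geodesicUHS ((-1 : ℂ) : OnePoint ℂ) ((1 : ℂ) : OnePoint ℂ))
      (geodesicUHS ((-w : ℂ) : OnePoint ℂ) ((w : ℂ) : OnePoint ℂ))) :
    Real.cosh (geodDist (geodesicUHS ((-1 : ℂ) : OnePoint ℂ) ((1 : ℂ) : OnePoint ℂ))
        (geodesicUHS ((-w : ℂ) : OnePoint ℂ) ((w : ℂ) : OnePoint ℂ))) =
      (1 + ‖((-1 + w) * (1 - w)) / ((-1 - w) * (1 + w))‖) /
        ‖1 - ((-1 + w) * (1 - w)) / ((-1 - w) * (1 + w))‖ :=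
  cosh_dist_special_case_general w hw2 hw0
end

section
/- Let $a,b,c,d \in \mathbb{C}$ with $c$ and $d$ linearly independent over $\mathbb{R}$ and $ad - bc = 0$. Let $A,B,C,D : \mathbb{Z}\times\mathbb{Z} \to \mathbb{C}$ be functions with $A(p,q)\to a$, $B(p,q)\to b$, $C(p,q)\to c$, $D(p,q)\to d$ as $|p|+|q| \to \infty$. Then $\frac{A(p,q)\,p + B(p,q)\,q}{C(p,q)\,p + D(p,q)\,q} \to \frac{a}{c}$ as $|p|+|q| \to \infty$, where $(p,q)$ ranges over pairs with $(p,q)\neq(0,0)$; in particular $Cp+Dq \neq 0$ for all large $|p|+|q|$ and the limit also equals $b/d$ when $b,d\neq 0$. -/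
/-!
Because `ad = bc`, the numerator minus `a / c` times the denominator is
`(A - (a/c) C) p + (B - (a/c) D) q`, whose coefficients tend to `0`; so it is `o(|p| + |q|)`.
Linear independence of `c, d` over `ℝ` gives `‖c p + d q‖ ≥ m (|p| + |q|)` for some `m > 0`, and
the perturbation `(C - c) p + (D - d) q` is `o(|p| + |q|)`, so the denominator is `≫ |p| + |q|`.
Hence the quotient minus `a / c` is `o(1)`.
-/

open Filter Topology Asymptotics

section RealNormedSpace

variable {E : Type*} [NormedAddCommGroup E] [NormedSpace ℝ E]

theorem LinearIndependent.exists_pos_mul_abs_add_abs_le_norm {c d : E}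
    (hcd : LinearIndependent ℝ ![c, d]) :
    ∃ m > 0, ∀ x y : ℝ, m * (|x| + |y|) ≤ ‖x • c + y • d‖ := by
  let f : ℝ × ℝ →ₗ[ℝ] E :=
    (LinearMap.toSpanSingleton ℝ E c).coprod (LinearMap.toSpanSingleton ℝ E d)
  have hf : Function.Injective f := by
    rw [← LinearMap.ker_eq_bot, LinearMap.ker_eq_bot']
    rintro ⟨x, y⟩ h
    simpa [f, Prod.ext_iff] using LinearIndependent.pair_iff.1 hcd x y (by simpa [f] using h)
  obtain ⟨K, hK, hKf⟩ := f.injective_iff_antilipschitz.1 hf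
  refine ⟨(2 * K)⁻¹, by positivity, fun x y => ?_⟩
  have hbound := ZeroHomClass.bound_of_antilipschitz f hKf (x, y)
  simp only [f, LinearMap.coprod_apply, LinearMap.toSpanSingleton_apply, Prod.norm_mk,
    Real.norm_eq_abs] at hbound
  rw [inv_mul_le_iff₀ (by positivity)]
  calc |x| + |y| ≤ 2 * max |x| |y| := by linarith [le_max_left |x| |y|, le_max_right |x| |y|]
    _ ≤ 2 * K * ‖x • c + y • d‖ := by linarith

variable {ι : Type*} {l : Filter ι} {C D : ι → E} {c d : E}

theorem isLittleO_smul_add_smul (hC : Tendsto C l (𝓝 0)) (hD : Tendsto D l (𝓝 0))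
    (x y : ι → ℝ) : (fun i => x i • C i + y i • D i) =o[l] fun i => |x i| + |y i| := by
  have hx : x =O[l] fun i => |x i| + |y i| := .of_bound' (.of_forall fun i =>
    (le_add_of_nonneg_right (abs_nonneg _)).trans (le_abs_self _))
  have hy : y =O[l] fun i => |x i| + |y i| := .of_bound' (.of_forall fun i =>
    (le_add_of_nonneg_left (abs_nonneg _)).trans (le_abs_self _))
  simpa using (hx.smul_isLittleO (isLittleO_one_iff ℝ |>.2 hC)).add
    (hy.smul_isLittleO (isLittleO_one_iff ℝ |>.2 hD))

theorem isBigO_abs_add_abs_smul_add_smul (hcd : LinearIndependent ℝ ![c, d])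
    (hC : Tendsto C l (𝓝 c)) (hD : Tendsto D l (𝓝 d)) (x y : ι → ℝ) :
    (fun i => |x i| + |y i|) =O[l] fun i => x i • C i + y i • D i := by
  obtain ⟨m, hm, hmin⟩ := hcd.exists_pos_mul_abs_add_abs_le_norm
  have hsmall := (isLittleO_smul_add_smul (tendsto_sub_nhds_zero_iff.2 hC)
    (tendsto_sub_nhds_zero_iff.2 hD) x y).bound (half_pos hm)
  refine .of_bound (2 / m) ?_
  filter_upwards [hsmall] with i hi
  have hsplit : x i • c + y i • d =
      (x i • C i + y i • D i) - (x i • (C i - c) + y i • (D i - d)) := by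
    simp only [smul_sub]; abel
  have hS : ‖|x i| + |y i|‖ = |x i| + |y i| := abs_of_nonneg (by positivity)
  rw [hS] at hi ⊢
  rw [div_mul_eq_mul_div, le_div_iff₀ hm]
  linarith [hmin (x i) (y i), hsplit ▸ norm_sub_le (x i • C i + y i • D i)
    (x i • (C i - c) + y i • (D i - d))]

theorem eventually_smul_add_smul_ne_zero (hcd : LinearIndependent ℝ ![c, d])
    (hC : Tendsto C l (𝓝 c)) (hD : Tendsto D l (𝓝 d)) {x y : ι → ℝ}
    (hxy : ∀ᶠ i in l, |x i| + |y i| ≠ 0) : ∀ᶠ i in l, x i • C i + y i • D i ≠ 0 := by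
  filter_upwards [(isBigO_abs_add_abs_smul_add_smul hcd hC hD x y).eq_zero_imp, hxy]
    with i himp hi h using hi (himp h)

end RealNormedSpace

theorem tendsto_smul_add_smul_div_smul_add_smul {ι : Type*} {l : Filter ι} {a b c d : ℂ}
    {A B C D : ι → ℂ} (hcd : LinearIndependent ℝ ![c, d]) (hdet : a * d - b * c = 0)
    (hA : Tendsto A l (𝓝 a)) (hB : Tendsto B l (𝓝 b)) (hC : Tendsto C l (𝓝 c))
    (hD : Tendsto D l (𝓝 d)) {x y : ι → ℝ} (hxy : ∀ᶠ i in l, |x i| + |y i| ≠ 0) :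
    Tendsto (fun i => (x i • A i + y i • B i) / (x i • C i + y i • D i)) l (𝓝 (a / c)) := by
  have hc : c ≠ 0 := hcd.ne_zero 0
  have hE : Tendsto (fun i => A i - a / c * C i) l (𝓝 0) := by
    simpa [div_mul_cancel₀ a hc] using hA.sub (hC.const_mul (a / c))
  have hF : Tendsto (fun i => B i - a / c * D i) l (𝓝 0) := by
    have hb : b = a / c * d := by rw [div_mul_eq_mul_div, eq_div_iff hc]; linear_combination -hdet
    simpa [← hb] using hB.sub (hD.const_mul (a / c))
  have hquot := ((isLittleO_smul_add_smul hE hF x y).trans_isBigO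
    (isBigO_abs_add_abs_smul_add_smul hcd hC hD x y)).tendsto_div_nhds_zero
  rw [← tendsto_sub_nhds_zero_iff]
  refine hquot.congr' ?_
  filter_upwards [eventually_smul_add_smul_ne_zero hcd hC hD hxy] with i hi
  rw [eq_sub_iff_add_eq, div_add' _ _ _ hi]
  congr 1
  simp only [Complex.real_smul]
  ring

noncomputable def absAddAtTop : Filter (ℤ × ℤ) := comap (fun pq => |pq.1| + |pq.2|) atTop

theorem eventually_absAddAtTop_iff {P : ℤ × ℤ → Prop} :
    (∀ᶠ pq in absAddAtTop, P pq) ↔ ∃ N : ℕ, ∀ p q : ℤ, (N : ℤ) < |p| + |q| → P (p, q) := by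
  rw [absAddAtTop, (atTop_basis_Ioi.comap _).eventually_iff]
  constructor
  · rintro ⟨N, -, hN⟩
    exact ⟨N.toNat, fun p q hpq => hN (N.self_le_toNat.trans_lt hpq)⟩
  · rintro ⟨N, hN⟩
    exact ⟨N, trivial, fun pq hpq => hN pq.1 pq.2 hpq⟩

theorem tendsto_absAddAtTop_iff {E : Type*} [SeminormedAddCommGroup E] {f : ℤ → ℤ → E} {a : E} :
    Tendsto (fun pq : ℤ × ℤ => f pq.1 pq.2) absAddAtTop (𝓝 a) ↔
      ∀ ε : ℝ, 0 < ε → ∃ N : ℕ, ∀ p q : ℤ, (N : ℤ) < |p| + |q| → ‖f p q - a‖ < ε := by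
  simp only [Metric.tendsto_nhds, eventually_absAddAtTop_iff, dist_eq_norm]

/-- Let `c, d` be linearly independent over `ℝ` and `ad - bc = 0`. If
`A(p,q) → a`, `B(p,q) → b`, `C(p,q) → c`, `D(p,q) → d` as `|p|+|q| → ∞`, then
`(Ap + Bq)/(Cp + Dq) → a/c` as `|p|+|q| → ∞`; in particular `Cp + Dq ≠ 0` for
all large `|p|+|q|`, and the limit also equals `b/d` when `b, d ≠ 0`. -/
theorem quotient_limit (a b c d : ℂ)
    (hind : ∀ x y : ℝ, (x : ℂ) * c + (y : ℂ) * d = 0 → x = 0 ∧ y = 0)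
    (hdet : a * d - b * c = 0)
    (A B C D : ℤ → ℤ → ℂ)
    (hA : ∀ ε : ℝ, 0 < ε → ∃ N : ℕ, ∀ p q : ℤ, (N : ℤ) < |p| + |q| →
      ‖A p q - a‖ < ε)
    (hB : ∀ ε : ℝ, 0 < ε → ∃ N : ℕ, ∀ p q : ℤ, (N : ℤ) < |p| + |q| →
      ‖B p q - b‖ < ε)
    (hC : ∀ ε : ℝ, 0 < ε → ∃ N : ℕ, ∀ p q : ℤ, (N : ℤ) < |p| + |q| →
      ‖C p q - c‖ < ε)
    (hD : ∀ ε : ℝ, 0 < ε → ∃ N : ℕ, ∀ p q : ℤ, (N : ℤ) < |p| + |q| →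
      ‖D p q - d‖ < ε) :
    (∃ N : ℕ, ∀ p q : ℤ, (N : ℤ) < |p| + |q| → C p q * p + D p q * q ≠ 0) ∧
    (∀ ε : ℝ, 0 < ε → ∃ N : ℕ, ∀ p q : ℤ, (N : ℤ) < |p| + |q| →
      ‖(A p q * p + B p q * q) / (C p q * p + D p q * q) - a / c‖ < ε) ∧
    (b ≠ 0 → d ≠ 0 → a / c = b / d) := by
  have hcd : LinearIndependent ℝ ![c, d] :=
    LinearIndependent.pair_iff.2 fun x y h => hind x y (by simpa [Complex.real_smul] using h)
  rw [← tendsto_absAddAtTop_iff] at hA hB hC hD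
  have hsmul (z : ℂ) (n : ℤ) : z * n = (n : ℝ) • z := by simp [Complex.real_smul, mul_comm]
  have hpq : ∀ᶠ pq : ℤ × ℤ in absAddAtTop, |(pq.1 : ℝ)| + |(pq.2 : ℝ)| ≠ 0 :=
    eventually_absAddAtTop_iff.2 ⟨0, fun p q h => by exact_mod_cast h.ne'⟩
  refine ⟨?_, ?_, fun hb hd => ?_⟩
  · simpa only [hsmul] using
      eventually_absAddAtTop_iff.1 (eventually_smul_add_smul_ne_zero hcd hC hD hpq)
  · simpa only [hsmul, ← tendsto_absAddAtTop_iff] using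
      tendsto_smul_add_smul_div_smul_add_smul hcd hdet hA hB hC hD hpq
  · have hc : c ≠ 0 := hcd.ne_zero 0
    rw [div_eq_div_iff hc hd]
    linear_combination hdet
end

section
/- For every real number $x$, the value of $f(x) = \frac{-x^4 - 8x^3 - 48x^2 - 128x - 128}{12(x^2 + 4x + 8)^2}$ lies in the closed interval $[-1/6, -1/12]$. -/
/-- For every real `x`, `(-x⁴ - 8x³ - 48x² - 128x - 128)/(12(x² + 4x + 8)²)`
lies in `[-1/6, -1/12]`. -/
theorem rational_function_range (x : ℝ) :
    (-x ^ 4 - 8 * x ^ 3 - 48 * x ^ 2 - 128 * x - 128) /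
        (12 * (x ^ 2 + 4 * x + 8) ^ 2) ∈ Set.Icc (-1 / 6 : ℝ) (-1 / 12) := by
  have hq : (0:ℝ) < x ^ 2 + 4 * x + 8 := by nlinarith [sq_nonneg (x + 2)]
  have hd : (0:ℝ) < 12 * (x ^ 2 + 4 * x + 8) ^ 2 := by positivity
  constructor
  · rw [le_div_iff₀ hd]
    nlinarith [sq_nonneg (x^2 + 4*x), sq_nonneg x, sq_nonneg (x+2)]
  · rw [div_le_iff₀ hd]
    nlinarith [sq_nonneg (x^2 + 4*x + 8), sq_nonneg (x+2), sq_nonneg x]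
end

section
/- Under the hypotheses of the previous setup (holomorphic $m(\theta), l(\theta)$ with $m(0)=l(0)=-1$, relation $l = -1 + a_1(m+1) + \frac{a_2}{2}(m+1)^2 + O((m+1)^3)$ with $a_1$ non-real, and $p\log(-m) + q\log(-l) = i\theta/2$), the second derivatives at $\theta = 0$ are $m''(0) = \frac{p + (a_1^2 + a_2)q}{4(p+a_1 q)^3}$ and $l''(0) = \frac{(a_1 - a_2)p + a_1^3 q}{4(p + a_1 q)^3}$. -/
/-!
At `θ = 0`, where `m = l = -1`, differentiating `p log(-m) + q log(-l) = iθ/2` once and twice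
gives `p m' + q l' = -i/2` and `p (m'' + m'²) + q (l'' + l'²) = 0`. Since `m + 1 = O(θ)`, the
error term of the relation curve is `O(θ³)`, so `l` and the quadratic in `m` share their
2-jet: `l' = a₁ m'` and `l'' = a₁ m'' + a₂ m'²`. As `a₁ ∉ ℝ`, `D = p + a₁ q ≠ 0`, so
`m' = -i/(2D)` and `m'² = -1/(4D²)`; the second-order equations are then linear in `m''`, `l''`.
-/

open Filter Asymptotics Topology

section IteratedDeriv

variable {𝕜 E : Type*} [NontriviallyNormedField 𝕜] [NormedAddCommGroup E] [NormedSpace 𝕜 E]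
  {f g : 𝕜 → E} {z₀ : 𝕜} {n : ℕ}

theorem AnalyticAt.natCast_le_analyticOrderAt_of_isBigO (hf : AnalyticAt 𝕜 f z₀)
    (h : f =O[𝓝 z₀] fun z => (z - z₀) ^ n) : (n : ℕ∞) ≤ analyticOrderAt f z₀ := by
  by_contra! hlt
  obtain ⟨k, hk⟩ := ENat.ne_top_iff_exists.mp hlt.ne_top
  rw [← hk, Nat.cast_lt] at hlt
  obtain ⟨g, hg, hg0, hfg⟩ := hf.analyticOrderAt_eq_natCast.mp hk.symm
  obtain ⟨c, hc⟩ := h.bound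
  -- Writing `f = (z - z₀) ^ k • g` with `k < n`, the bound forces `g → 0` at `z₀`.
  have hbound : ∀ᶠ z in 𝓝[≠] z₀, ‖g z‖ ≤ c * ‖z - z₀‖ ^ (n - k) := by
    filter_upwards [self_mem_nhdsWithin, nhdsWithin_le_nhds (hc.and hfg)] with z hz ⟨hcz, hfz⟩
    have hpos : 0 < ‖z - z₀‖ ^ k := pow_pos (norm_pos_iff.mpr (sub_ne_zero.mpr hz)) k
    rw [hfz, norm_smul, norm_pow, norm_pow, ← Nat.add_sub_of_le hlt.le, pow_add] at hcz
    nlinarith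
  have hlim : Tendsto (fun z => c * ‖z - z₀‖ ^ (n - k)) (𝓝[≠] z₀) (𝓝 0) := by
    have : Continuous fun z => c * ‖z - z₀‖ ^ (n - k) := by fun_prop
    replace := this.tendsto z₀
    simpa [Nat.sub_ne_zero_of_lt hlt] using this.mono_left nhdsWithin_le_nhds
  exact hg0 (tendsto_nhds_unique (hg.continuousAt.tendsto.mono_left nhdsWithin_le_nhds)
    (squeeze_zero_norm' hbound hlim))

theorem AnalyticAt.iteratedDeriv_eq_of_isBigO_sub [CharZero 𝕜] [CompleteSpace E]
    (hf : AnalyticAt 𝕜 f z₀) (hg : AnalyticAt 𝕜 g z₀)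
    (h : (fun z => f z - g z) =O[𝓝 z₀] fun z => (z - z₀) ^ n) {i : ℕ} (hi : i < n) :
    iteratedDeriv i f z₀ = iteratedDeriv i g z₀ := by
  have hfg := hf.fun_sub hg
  have := (natCast_le_analyticOrderAt_iff_iteratedDeriv_eq_zero hfg).mp
    (hfg.natCast_le_analyticOrderAt_of_isBigO h) i hi
  rwa [iteratedDeriv_fun_sub hf.contDiffAt hg.contDiffAt, sub_eq_zero] at this

end IteratedDeriv

theorem deriv_and_iteratedDeriv_two_of_isBigO_quadratic {𝕜 : Type*} [NontriviallyNormedField 𝕜]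
    [CharZero 𝕜] [CompleteSpace 𝕜] (a1 a2 : 𝕜) {m l : 𝕜 → 𝕜} {z₀ : 𝕜}
    (hm : AnalyticAt 𝕜 m z₀) (hl : AnalyticAt 𝕜 l z₀) (hm0 : m z₀ = -1)
    (hrel : (fun z => l z - (-1 + a1 * (m z + 1) + a2 / 2 * (m z + 1) ^ 2))
      =O[𝓝 z₀] fun z => (m z + 1) ^ 3) :
    deriv l z₀ = a1 * deriv m z₀ ∧
      iteratedDeriv 2 l z₀ = a1 * iteratedDeriv 2 m z₀ + a2 * deriv m z₀ ^ 2 := by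
  set Q : 𝕜 → 𝕜 := fun w => -1 + a1 * (w + 1) + a2 / 2 * (w + 1) ^ 2
  have hQ' : deriv Q = fun w => a1 + a2 * (w + 1) := by
    funext w
    have hw : HasDerivAt (fun w : 𝕜 => w + 1) 1 w := (hasDerivAt_id w).add_const 1
    refine HasDerivAt.deriv ?_
    convert ((hw.const_mul a1).const_add (-1)).fun_add ((hw.fun_pow 2).const_mul (a2 / 2)) using 1
    simp only [mul_one, Nat.cast_ofNat, Nat.add_one_sub_one, pow_one]
    ring
  have hQ'' : iteratedDeriv 2 Q (m z₀) = a2 := by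
    rw [iteratedDeriv_succ, iteratedDeriv_one, hQ']
    simp
  have hQm : AnalyticAt 𝕜 (Q ∘ m) z₀ := (by fun_prop : AnalyticAt 𝕜 Q (m z₀)).comp hm
  have hm1 : (fun z => m z + 1) =O[𝓝 z₀] fun z => z - z₀ := by
    simpa [hm0] using hm.differentiableAt.isBigO_sub
  have hjet {i : ℕ} (hi : i < 3) :=
    hl.iteratedDeriv_eq_of_isBigO_sub hQm (hrel.trans (hm1.pow 3)) hi
  constructor
  · rw [← iteratedDeriv_one, hjet (by norm_num), iteratedDeriv_one,
      deriv_comp _ (by fun_prop) hm.differentiableAt, hQ']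
    simp [hm0]
  · rw [hjet (by norm_num), iteratedDeriv_comp_two (by fun_prop) hm.contDiffAt, hQ'', hQ']
    simp only [hm0, neg_add_cancel, mul_zero, add_zero]
    ring

namespace Complex

theorem ofReal_add_mul_ofReal_ne_zero {a : ℂ} (ha : a.im ≠ 0) {p q : ℝ}
    (hpq : (p, q) ≠ (0, 0)) : (p : ℂ) + a * q ≠ 0 := by
  intro h
  have hq : q = 0 := by
    simpa [ha] using congrArg im h
  have hp : p = 0 := by
    simpa [hq] using congrArg re h
  exact hpq (by simp [hp, hq])

theorem deriv_log_comp {u : ℂ → ℂ} {z₀ : ℂ} (hu : DifferentiableAt ℂ u z₀)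
    (hz : u z₀ ∈ slitPlane) : deriv (fun z => log (u z)) z₀ = deriv u z₀ / u z₀ :=
  (hu.hasDerivAt.clog hz).deriv

theorem iteratedDeriv_two_log_comp {u : ℂ → ℂ} {z₀ : ℂ} (hu : ContDiffAt ℂ 2 u z₀)
    (hz : u z₀ ∈ slitPlane) :
    iteratedDeriv 2 (fun z => log (u z)) z₀ =
      iteratedDeriv 2 u z₀ / u z₀ - (deriv u z₀ / u z₀) ^ 2 := by
  rw [← Function.comp_def, iteratedDeriv_comp_two (analyticAt_clog hz).contDiffAt hu,
    iteratedDeriv_succ_log (n := 1) hz, deriv_log hz]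
  have hu0 : u z₀ ≠ 0 := slitPlane_ne_zero hz
  simp only [pow_one, Nat.factorial_one, Nat.cast_one, mul_one, Int.reduceNeg, Int.reduceSub,
    zpow_neg, zpow_ofNat, neg_mul, one_mul]
  field_simp
  ring

theorem deriv_and_iteratedDeriv_two_const_mul_log_neg_add {m l : ℂ → ℂ} {z₀ : ℂ} (p q : ℂ)
    (hm : AnalyticAt ℂ m z₀) (hl : AnalyticAt ℂ l z₀) (hm0 : m z₀ = -1) (hl0 : l z₀ = -1) :
    deriv (fun z => p * log (-m z) + q * log (-l z)) z₀ = -(p * deriv m z₀ + q * deriv l z₀) ∧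
      iteratedDeriv 2 (fun z => p * log (-m z) + q * log (-l z)) z₀ =
        -(p * (iteratedDeriv 2 m z₀ + deriv m z₀ ^ 2) +
          q * (iteratedDeriv 2 l z₀ + deriv l z₀ ^ 2)) := by
  have hlogm : AnalyticAt ℂ (fun z => log (-m z)) z₀ := hm.fun_neg.clog (by simp [hm0])
  have hlogl : AnalyticAt ℂ (fun z => log (-l z)) z₀ := hl.fun_neg.clog (by simp [hl0])
  constructor
  · rw [deriv_fun_add (hlogm.differentiableAt.const_mul p) (hlogl.differentiableAt.const_mul q),
      deriv_const_mul _ hlogm.differentiableAt, deriv_const_mul _ hlogl.differentiableAt,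
      deriv_log_comp hm.fun_neg.differentiableAt (by simp [hm0]),
      deriv_log_comp hl.fun_neg.differentiableAt (by simp [hl0])]
    simp only [deriv.fun_neg', hm0, hl0, neg_neg, div_one]
    ring
  · rw [iteratedDeriv_fun_add (analyticAt_const.fun_mul hlogm).contDiffAt
      (analyticAt_const.fun_mul hlogl).contDiffAt,
      iteratedDeriv_const_mul_field, iteratedDeriv_const_mul_field,
      iteratedDeriv_two_log_comp hm.fun_neg.contDiffAt (by simp [hm0]),
      iteratedDeriv_two_log_comp hl.fun_neg.contDiffAt (by simp [hl0])]
    simp only [iteratedDeriv_fun_neg, deriv.fun_neg', hm0, hl0, neg_neg, div_one, even_two,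
      Even.neg_pow]
    ring

end Complex

theorem dehn_filling_second_order_solution {a1 a2 p q μ μ2 ν ν2 : ℂ} (hD : p + a1 * q ≠ 0)
    (h1 : ν = a1 * μ) (h2 : ν2 = a1 * μ2 + a2 * μ ^ 2)
    (h3 : -(p * μ + q * ν) = Complex.I / 2)
    (h4 : -(p * (μ2 + μ ^ 2) + q * (ν2 + ν ^ 2)) = 0) :
    μ2 = (p + (a1 ^ 2 + a2) * q) / (4 * (p + a1 * q) ^ 3) ∧
    ν2 = ((a1 - a2) * p + a1 ^ 3 * q) / (4 * (p + a1 * q) ^ 3) := by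
  have hμ : (p + a1 * q) * μ = -(Complex.I / 2) := by linear_combination -h3 - q * h1
  have hμsq : (p + a1 * q) ^ 2 * μ ^ 2 = -1 / 4 := by
    linear_combination ((p + a1 * q) * μ - Complex.I / 2) * hμ + Complex.I_sq / 4
  have hμ2 : (p + a1 * q) * μ2 = -(p + (a1 ^ 2 + a2) * q) * μ ^ 2 := by
    linear_combination -h4 - q * h2 - q * (ν + a1 * μ) * h1
  have hμ2' : μ2 = (p + (a1 ^ 2 + a2) * q) / (4 * (p + a1 * q) ^ 3) := by
    field_simp
    linear_combination 4 * (p + a1 * q) ^ 2 * hμ2 - 4 * (p + (a1 ^ 2 + a2) * q) * hμsq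
  refine ⟨hμ2', ?_⟩
  rw [h2, hμ2']
  field_simp
  linear_combination 4 * a2 * (p + a1 * q) * hμsq

/-- Second derivatives of the eigenvalue functions `m(θ), l(θ)` at `θ = 0` under
the geometric-curve relation (to second order) and the generalized Dehn-filling
relation `p log(-m) + q log(-l) = iθ/2`. -/
theorem second_derivatives_dehn_filling (a1 a2 : ℂ) (ha1 : a1.im ≠ 0)
    (p q : ℝ) (hpq : (p, q) ≠ (0, 0))
    (m l : ℂ → ℂ) (hm : AnalyticAt ℂ m 0) (hl : AnalyticAt ℂ l 0)
    (hm0 : m 0 = -1) (hl0 : l 0 = -1)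
    (hrel : (fun θ : ℂ => l θ - (-1 + a1 * (m θ + 1) + a2 / 2 * (m θ + 1) ^ 2))
      =O[nhds 0] fun θ : ℂ => (m θ + 1) ^ 3)
    (hdehn : ∀ᶠ θ : ℂ in nhds 0,
      (p : ℂ) * Complex.log (-(m θ)) + (q : ℂ) * Complex.log (-(l θ)) =
        Complex.I * θ / 2) :
    iteratedDeriv 2 m 0 = ((p : ℂ) + (a1 ^ 2 + a2) * q) / (4 * ((p : ℂ) + a1 * q) ^ 3) ∧
    iteratedDeriv 2 l 0 = ((a1 - a2) * p + a1 ^ 3 * q) / (4 * ((p : ℂ) + a1 * q) ^ 3) := by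
  obtain ⟨hl1, hl2⟩ := deriv_and_iteratedDeriv_two_of_isBigO_quadratic a1 a2 hm hl hm0 hrel
  obtain ⟨hF1, hF2⟩ :=
    Complex.deriv_and_iteratedDeriv_two_const_mul_log_neg_add p q hm hl hm0 hl0
  have hF : (fun θ => (p : ℂ) * Complex.log (-m θ) + q * Complex.log (-l θ)) =ᶠ[nhds 0]
      fun θ => Complex.I * θ / 2 := hdehn
  have hlin1 : deriv (fun θ : ℂ => Complex.I * θ / 2) 0 = Complex.I / 2 := by simp
  have hlin2 : iteratedDeriv 2 (fun θ : ℂ => Complex.I * θ / 2) 0 = 0 := by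
    simp [iteratedDeriv_succ]
  rw [hF.deriv_eq, hlin1] at hF1
  rw [(hF.iteratedDeriv 2).eq_of_nhds, hlin2] at hF2
  exact dehn_filling_second_order_solution (Complex.ofReal_add_mul_ofReal_ne_zero ha1 hpq)
    hl1 hl2 hF1.symm hF2.symm
end

section
/- Suppose $a_2 = a_1 - a_1^2$ and the hypotheses of the generalized Dehn-filling setup hold ($m(0)=l(0)=-1$, $l = -1 + a_1(m+1) + \frac{a_2}{2}(m+1)^2 + \frac{a_3}{6}(m+1)^3 + O((m+1)^4)$, $p\log(-m)+q\log(-l) = i\theta/2$, $a_1$ non-real). Then the Taylor expansion of $m$ in $\theta$ is $m(\theta) = -1 - \frac{i}{2(p+a_1 q)}\theta + \frac{1}{8(p+a_1 q)^2}\theta^2 + i\frac{p + (3a_1 - 3a_1^2 + a_1^3 - a_3)q}{48(p+a_1 q)^4}\theta^3 + O(\theta^4)$. -/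
/-!
Write `u = m + 1`. Expanding both logarithms to third order turns the Dehn filling equation
into `iθ/2 + s u + e₂ u² + e₃ u³ = O(u⁴)` with `s = p + a₁q`, which is nonzero because
`a₁ ∉ ℝ`; the relation `a₂ = a₁ - a₁²` makes `e₂ = s/2`. As `m` is analytic,
`u = c₁θ + c₂θ² + c₃θ³ + O(θ⁴)`; substituting this into the equation and comparing the
coefficients of `θ, θ², θ³` (series reversion) determines `c₁, c₂, c₃`.
-/

open Filter Asymptotics Topology

def cubic {R : Type*} [CommRing R] (b1 b2 b3 z : R) : R := b1 * z + b2 * z ^ 2 + b3 * z ^ 3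

section NormedField

variable {α 𝕜 : Type*} [NormedField 𝕜] {F : Filter α} {u v : α → 𝕜}

theorem continuous_cubic (b1 b2 b3 : 𝕜) : Continuous (cubic b1 b2 b3) := by
  unfold cubic
  fun_prop

theorem Asymptotics.IsBigO.mul_tendsto {f g h : α → 𝕜} {c : 𝕜} (hfg : f =O[F] g)
    (hh : Tendsto h F (𝓝 c)) : (fun x => f x * h x) =O[F] g := by
  simpa using hfg.mul (hh.isBigO_one 𝕜)

theorem Filter.Tendsto.isBigO_pow_of_le (hu : Tendsto u F (𝓝 0)) {j k : ℕ} (hkj : k ≤ j) :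
    (fun x => u x ^ j) =O[F] fun x => u x ^ k :=
  ((isBigO_refl (fun x => u x ^ k) F).mul_tendsto (hu.pow (j - k))).congr_left fun x => by
    rw [← pow_add, Nat.add_sub_cancel' hkj]

theorem Filter.Tendsto.cubic_comp (hu : Tendsto u F (𝓝 0)) (b1 b2 b3 : 𝕜) :
    Tendsto (fun x => cubic b1 b2 b3 (u x)) F (𝓝 0) :=
  ((continuous_cubic b1 b2 b3).tendsto' 0 0 (by simp [cubic])).comp hu

theorem isBigO_cubic_comp (hu : Tendsto u F (𝓝 0)) (b1 b2 b3 : 𝕜) :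
    (fun x => cubic b1 b2 b3 (u x)) =O[F] u := by
  have hlim : Tendsto (fun x => b1 + b2 * u x + b3 * u x ^ 2) F (𝓝 b1) :=
    ((by fun_prop : Continuous fun z : 𝕜 => b1 + b2 * z + b3 * z ^ 2).tendsto' 0 b1
      (by simp)).comp hu
  exact ((isBigO_refl u F).mul_tendsto hlim).congr_left fun x => by unfold cubic; ring

variable {b1 b2 b3 : 𝕜}

theorem isBigO_of_isBigO_sub_cubic (hu : Tendsto u F (𝓝 0))
    (hv : (fun x => v x - cubic b1 b2 b3 (u x)) =O[F] fun x => u x ^ 4) : v =O[F] u :=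
  (((hv.trans (hu.isBigO_pow_of_le (by norm_num : 1 ≤ 4))).congr_right fun x => pow_one _).add
    (isBigO_cubic_comp hu b1 b2 b3)).congr_left fun x => by simp

theorem isBigO_cubic_comp_sub_cubic (hu : Tendsto u F (𝓝 0))
    (hv : (fun x => v x - cubic b1 b2 b3 (u x)) =O[F] fun x => u x ^ 4) (e1 e2 e3 : 𝕜) :
    (fun x => cubic e1 e2 e3 (v x) - cubic (e1 * b1) (e1 * b2 + e2 * b1 ^ 2)
      (e1 * b3 + 2 * e2 * b1 * b2 + e3 * b1 ^ 3) (u x)) =O[F] fun x => u x ^ 4 := by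
  set V := fun x => cubic b1 b2 b3 (u x)
  have hv0 : Tendsto v F (𝓝 0) := (isBigO_of_isBigO_sub_cubic hu hv).trans_tendsto hu
  have hV : Tendsto V F (𝓝 0) := hu.cubic_comp b1 b2 b3
  have hfactor : Tendsto (fun x => e1 + e2 * (v x + V x) + e3 * (v x ^ 2 + v x * V x + V x ^ 2))
      F (𝓝 e1) := by
    simpa using (tendsto_const_nhds (x := e1)).add ((hv0.add hV).const_mul e2) |>.add
      ((((hv0.pow 2).add (hv0.mul hV)).add (hV.pow 2)).const_mul e3)
  -- `cubic e1 e2 e3 (V x)` minus its truncation is `u x ^ 4` times this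
  have hremainder : Tendsto (fun x => e2 * (2 * b1 * b3 + (b2 + b3 * u x) ^ 2) +
      e3 * (b2 + b3 * u x) * (3 * b1 ^ 2 + 3 * b1 * (u x * (b2 + b3 * u x)) +
        (u x * (b2 + b3 * u x)) ^ 2)) F
      (𝓝 (e2 * (2 * b1 * b3 + b2 ^ 2) + e3 * b2 * 3 * b1 ^ 2)) :=
    ((by fun_prop : Continuous fun z : 𝕜 => e2 * (2 * b1 * b3 + (b2 + b3 * z) ^ 2) +
      e3 * (b2 + b3 * z) * (3 * b1 ^ 2 + 3 * b1 * (z * (b2 + b3 * z)) +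
        (z * (b2 + b3 * z)) ^ 2)).tendsto' 0 _ (by ring)).comp hu
  refine ((hv.mul_tendsto hfactor).add
    ((isBigO_refl (fun x => u x ^ 4) F).mul_tendsto hremainder)).congr_left fun x => ?_
  simp only [V, cubic]
  ring

end NormedField

section NontriviallyNormedField

variable {𝕜 : Type*} [NontriviallyNormedField 𝕜]

theorem eq_zero_of_pow_mul_isBigO {g : 𝕜 → 𝕜} {c : 𝕜} {k n : ℕ} (hkn : k < n)
    (hg : Tendsto g (𝓝 0) (𝓝 c)) (h : (fun θ => θ ^ k * g θ) =O[𝓝 0] fun θ => θ ^ n) :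
    c = 0 := by
  by_contra hc
  have hsmall : (fun θ => θ ^ k * (g θ - c)) =o[𝓝 0] fun θ => θ ^ k := by
    simpa using (isBigO_refl (fun θ : 𝕜 => θ ^ k) _).mul_isLittleO
      ((isLittleO_one_iff 𝕜).2 (tendsto_sub_nhds_zero_iff.2 hg))
  have hconst : (fun θ => c * θ ^ k) =o[𝓝 0] fun θ => θ ^ k :=
    ((h.trans_isLittleO (isLittleO_pow_pow hkn)).sub hsmall).congr_left fun θ => by ring
  refine isLittleO_irrefl ?_ ((isLittleO_const_mul_left_iff hc).1 hconst)
  have hne : ∀ᶠ θ in 𝓝[≠] (0 : 𝕜), θ ^ k ≠ 0 :=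
    eventually_nhdsWithin_of_forall fun θ hθ => pow_ne_zero k hθ
  exact hne.frequently.filter_mono nhdsWithin_le_nhds

theorem cubic_coeffs_eq_zero_of_isBigO {A1 A2 A3 : 𝕜}
    (h : cubic A1 A2 A3 =O[𝓝 0] fun θ => θ ^ 4) : A1 = 0 ∧ A2 = 0 ∧ A3 = 0 := by
  have hA1 : A1 = 0 := eq_zero_of_pow_mul_isBigO (k := 1) (by norm_num)
    ((by fun_prop : Continuous fun θ : 𝕜 => A1 + A2 * θ + A3 * θ ^ 2).tendsto' 0 A1 (by simp))
    (h.congr_left fun θ => by unfold cubic; ring)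
  subst hA1
  have hA2 : A2 = 0 := eq_zero_of_pow_mul_isBigO (k := 2) (by norm_num)
    ((by fun_prop : Continuous fun θ : 𝕜 => A2 + A3 * θ).tendsto' 0 A2 (by simp))
    (h.congr_left fun θ => by unfold cubic; ring)
  subst hA2
  have hA3 : A3 = 0 := eq_zero_of_pow_mul_isBigO (k := 3) (by norm_num) tendsto_const_nhds
    (h.congr_left fun θ => by unfold cubic; ring)
  exact ⟨rfl, rfl, hA3⟩

theorem cubic_series_reversion {u : 𝕜 → 𝕜} {t c1 c2 c3 e1 e2 e3 : 𝕜} (he1 : e1 ≠ 0)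
    (hu : (fun θ => u θ - cubic c1 c2 c3 θ) =O[𝓝 0] fun θ => θ ^ 4)
    (hP : (fun θ => t * θ + cubic e1 e2 e3 (u θ)) =O[𝓝 0] fun θ => θ ^ 4) :
    c1 = -t / e1 ∧ c2 = -e2 * t ^ 2 / e1 ^ 3 ∧
      c3 = -(2 * e2 ^ 2 - e1 * e3) * t ^ 3 / e1 ^ 5 := by
  obtain ⟨h1, h2, h3⟩ := cubic_coeffs_eq_zero_of_isBigO (A1 := t + e1 * c1)
    (A2 := e1 * c2 + e2 * c1 ^ 2) (A3 := e1 * c3 + 2 * e2 * c1 * c2 + e3 * c1 ^ 3)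
    ((hP.sub (isBigO_cubic_comp_sub_cubic (u := fun θ => θ) tendsto_id hu e1 e2 e3)).congr_left
      fun θ => by simp only [cubic]; ring)
  obtain rfl : c1 = -t / e1 := by
    field_simp
    linear_combination h1
  obtain rfl : c2 = -e2 * t ^ 2 / e1 ^ 3 := by
    field_simp
    field_simp at h2
    linear_combination h2
  refine ⟨rfl, rfl, ?_⟩
  field_simp
  field_simp at h3
  linear_combination h3

theorem AnalyticAt.exists_isBigO_sub_cubic {f : 𝕜 → 𝕜} (hf : AnalyticAt 𝕜 f 0) :
    ∃ c1 c2 c3 : 𝕜,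
      (fun θ => f θ - (f 0 + cubic c1 c2 c3 θ)) =O[𝓝 0] fun θ => θ ^ 4 := by
  obtain ⟨pf, hpf⟩ := hf
  refine ⟨pf.coeff 1, pf.coeff 2, pf.coeff 3, ?_⟩
  have h := isBigO_norm_right.1
    ((hpf.isBigO_sub_partialSum_pow 4).congr_right fun θ => (norm_pow θ 4).symm)
  refine h.congr_left fun θ => ?_
  simp only [zero_add, FormalMultilinearSeries.partialSum, Finset.sum_range_succ,
    Finset.sum_range_zero, FormalMultilinearSeries.apply_eq_pow_smul_coeff, smul_eq_mul, cubic,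
    show pf.coeff 0 = f 0 from hpf.coeff_zero 1]
  ring

end NontriviallyNormedField

section Log

variable {α : Type*} {F : Filter α} {u v : α → ℂ}

theorem isBigO_log_one_sub_add_cubic (hv : Tendsto v F (𝓝 0)) :
    (fun x => Complex.log (1 - v x) + cubic 1 (1 / 2) (1 / 3) (v x)) =O[F]
      fun x => v x ^ 4 := by
  refine (((Complex.log_sub_logTaylor_isBigO 3).comp_tendsto (by simpa using hv.neg)).congr_left
    fun x => ?_).congr_right fun x => by simp only [Function.comp_apply]; ring
  simp only [Complex.logTaylor, Finset.sum_range_succ, Finset.sum_range_zero, Function.comp_apply,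
    cubic, ← sub_eq_add_neg]
  push_cast
  ring

theorem isBigO_log_one_sub_add_cubic_comp {b1 b2 b3 : ℂ} (hu : Tendsto u F (𝓝 0))
    (hv : (fun x => v x - cubic b1 b2 b3 (u x)) =O[F] fun x => u x ^ 4) :
    (fun x => Complex.log (1 - v x) +
      cubic b1 (b2 + b1 ^ 2 / 2) (b3 + b1 * b2 + b1 ^ 3 / 3) (u x)) =O[F] fun x => u x ^ 4 := by
  have hvu := isBigO_of_isBigO_sub_cubic hu hv
  have hlog := (isBigO_log_one_sub_add_cubic (hvu.trans_tendsto hu)).trans (hvu.pow 4)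
  refine (hlog.sub (isBigO_cubic_comp_sub_cubic hu hv 1 (1 / 2) (1 / 3))).congr_left fun x => ?_
  simp only [cubic]
  ring

end Log

theorem isBigO_dehn_filling_cubic {F : Filter ℂ} {a1 a2 a3 : ℂ} {p q : ℝ} {m l : ℂ → ℂ}
    (hu : Tendsto (fun θ => m θ + 1) F (𝓝 0))
    (hrel : (fun θ => l θ - (-1 + a1 * (m θ + 1) + a2 / 2 * (m θ + 1) ^ 2 +
        a3 / 6 * (m θ + 1) ^ 3)) =O[F] fun θ => (m θ + 1) ^ 4)
    (hdehn : ∀ᶠ θ in F,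
      (p : ℂ) * Complex.log (-(m θ)) + (q : ℂ) * Complex.log (-(l θ)) = Complex.I * θ / 2) :
    (fun θ => Complex.I / 2 * θ + cubic ((p : ℂ) + a1 * q) (p / 2 + q * (a2 + a1 ^ 2) / 2)
      (p / 3 + q * (a3 / 6 + a1 * a2 / 2 + a1 ^ 3 / 3)) (m θ + 1)) =O[F]
      fun θ => (m θ + 1) ^ 4 := by
  have hlogl := isBigO_log_one_sub_add_cubic_comp hu (v := fun θ => l θ + 1)
    (b1 := a1) (b2 := a2 / 2) (b3 := a3 / 6) (hrel.congr_left fun θ => by simp only [cubic]; ring)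
  refine (((isBigO_log_one_sub_add_cubic hu).const_mul_left p).add
    (hlogl.const_mul_left q)).congr' ?_ EventuallyEq.rfl
  filter_upwards [hdehn] with θ hθ
  rw [sub_add_cancel_right, sub_add_cancel_right]
  simp only [cubic]
  linear_combination hθ

theorem Complex.ofReal_add_mul_ofReal_ne_zero_s10 {a : ℂ} (ha : a.im ≠ 0) {p q : ℝ}
    (hpq : (p, q) ≠ (0, 0)) : (p : ℂ) + a * q ≠ 0 := by
  intro h
  have hq : q = 0 := by simpa [ha] using congrArg Complex.im h
  have hp : p = 0 := by simpa [hq] using congrArg Complex.re h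
  exact hpq (by simp [hp, hq])

theorem taylor_expansion_m_general (a1 a2 a3 : ℂ) (ha1 : a1.im ≠ 0) (ha2 : a2 = a1 - a1 ^ 2)
    (p q : ℝ) (hpq : (p, q) ≠ (0, 0))
    (m l : ℂ → ℂ) (hm : AnalyticAt ℂ m 0)
    (hm0 : m 0 = -1)
    (hrel : (fun θ : ℂ => l θ - (-1 + a1 * (m θ + 1) + a2 / 2 * (m θ + 1) ^ 2 +
        a3 / 6 * (m θ + 1) ^ 3)) =O[nhds 0] fun θ : ℂ => (m θ + 1) ^ 4)
    (hdehn : ∀ᶠ θ : ℂ in nhds 0,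
      (p : ℂ) * Complex.log (-(m θ)) + (q : ℂ) * Complex.log (-(l θ)) =
        Complex.I * θ / 2) :
    (fun θ : ℂ => m θ -
        (-1 - Complex.I / (2 * ((p : ℂ) + a1 * q)) * θ +
          1 / (8 * ((p : ℂ) + a1 * q) ^ 2) * θ ^ 2 +
          Complex.I * ((p : ℂ) + (3 * a1 - 3 * a1 ^ 2 + a1 ^ 3 - a3) * q) /
            (48 * ((p : ℂ) + a1 * q) ^ 4) * θ ^ 3))
      =O[nhds 0] fun θ : ℂ => θ ^ 4 := by
  have hs := Complex.ofReal_add_mul_ofReal_ne_zero_s10 ha1 hpq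
  obtain ⟨c1, c2, c3, hmc⟩ := hm.exists_isBigO_sub_cubic
  rw [hm0] at hmc
  have hu_cubic : (fun θ => (m θ + 1) - cubic c1 c2 c3 θ) =O[𝓝 0] fun θ => θ ^ 4 :=
    hmc.congr_left fun θ => by ring
  have hu : (fun θ => m θ + 1) =O[𝓝 0] fun θ => θ :=
    isBigO_of_isBigO_sub_cubic (u := fun θ => θ) tendsto_id hu_cubic
  have hdehn_cubic :=
    (isBigO_dehn_filling_cubic (hu.trans_tendsto tendsto_id) hrel hdehn).trans (hu.pow 4)
  obtain ⟨rfl, rfl, rfl⟩ := cubic_series_reversion hs hu_cubic hdehn_cubic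
  refine hmc.congr_left fun θ => ?_
  subst ha2
  simp only [cubic, div_pow, Complex.I_sq, Complex.I_pow_three]
  field_simp
  ring

/-- When `a₂ = a₁ - a₁²`, the Taylor expansion of `m` in `θ` is
`m(θ) = -1 - i/(2(p+a₁q)) θ + 1/(8(p+a₁q)²) θ² + i(p + (3a₁-3a₁²+a₁³-a₃)q)/(48(p+a₁q)⁴) θ³ + O(θ⁴)`. -/
theorem taylor_expansion_m (a1 a2 a3 : ℂ) (ha1 : a1.im ≠ 0) (ha2 : a2 = a1 - a1 ^ 2)
    (p q : ℝ) (hpq : (p, q) ≠ (0, 0))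
    (m l : ℂ → ℂ) (hm : AnalyticAt ℂ m 0) (hl : AnalyticAt ℂ l 0)
    (hm0 : m 0 = -1) (hl0 : l 0 = -1)
    (hrel : (fun θ : ℂ => l θ - (-1 + a1 * (m θ + 1) + a2 / 2 * (m θ + 1) ^ 2 +
        a3 / 6 * (m θ + 1) ^ 3)) =O[nhds 0] fun θ : ℂ => (m θ + 1) ^ 4)
    (hdehn : ∀ᶠ θ : ℂ in nhds 0,
      (p : ℂ) * Complex.log (-(m θ)) + (q : ℂ) * Complex.log (-(l θ)) =
        Complex.I * θ / 2) :
    (fun θ : ℂ => m θ -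
        (-1 - Complex.I / (2 * ((p : ℂ) + a1 * q)) * θ +
          1 / (8 * ((p : ℂ) + a1 * q) ^ 2) * θ ^ 2 +
          Complex.I * ((p : ℂ) + (3 * a1 - 3 * a1 ^ 2 + a1 ^ 3 - a3) * q) /
            (48 * ((p : ℂ) + a1 * q) ^ 4) * θ ^ 3))
      =O[nhds 0] fun θ : ℂ => θ ^ 4 :=
  taylor_expansion_m_general a1 a2 a3 ha1 ha2 p q hpq m l hm hm0 hrel hdehn
end

section
/- For any $x, y \in \mathbb{C}$ with $x \neq 0$ and $w := (x^2 y - x^2 + 1)(x^2 y + (x^2-1)^2) \neq 0$, setting $z$ to be a square root of $x^2(1 - x^2 - y)/w$, the matrices $A = \begin{pmatrix} x & 1 \\ 0 & 1/x \end{pmatrix}$, $B = \begin{pmatrix} x & 0 \\ y & 1/x \end{pmatrix}$, $C = \begin{pmatrix} -\frac{x(x^2 y^2 + x^2(x^2-3)y - (x^2-1)^2)}{zw} & z \\ zy & \frac{z(1-x^2)}{x} \end{pmatrix}$ in $\mathrm{SL}_2(\mathbb{C})$ satisfy the Whitehead link group relations $AC = CB$ and $CABA^{-1} = AB^{-1}ABA^{-1}C$.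 -/
open Matrix

/-!
The matrix `C` is `z • D` for a matrix `D` depending on `x` and `y` only, and both relations are
homogeneous of degree one in `C`. They therefore reduce to the same relations for `D`, which are
identities between rational functions of `x` and `y`, checked entrywise. The scalar `z` only
normalises the determinant: `det D = w / (x²(1 - x² - y))`, so `det C = z² det D = 1`.
-/

theorem Matrix.inv_fin_two_of_det_eq_one {R : Type*} [CommRing R] {a b c d : R}
    (h : !![a, b; c, d].det = 1) : !![a, b; c, d]⁻¹ = !![d, -b; -c, a] := by
  rw [inv_def, h, Ring.inverse_one, one_smul, adjugate_fin_two_of]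

namespace Whitehead

variable {K : Type*} [Field K] {x y : K}

def matA (x : K) : Matrix (Fin 2) (Fin 2) K := !![x, 1; 0, 1 / x]

def matB (x y : K) : Matrix (Fin 2) (Fin 2) K := !![x, 0; y, 1 / x]

def matD (x y : K) : Matrix (Fin 2) (Fin 2) K :=
  !![-(x * (x ^ 2 * y ^ 2 + x ^ 2 * (x ^ 2 - 3) * y - (x ^ 2 - 1) ^ 2)) /
      (x ^ 2 * (1 - x ^ 2 - y)), 1;
     y, (1 - x ^ 2) / x]

theorem det_matA (hx : x ≠ 0) : (matA x).det = 1 := by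
  simp [matA, det_fin_two_of, hx]

theorem det_matB (hx : x ≠ 0) : (matB x y).det = 1 := by
  simp [matB, det_fin_two_of, hx]

theorem matA_inv (hx : x ≠ 0) : (matA x)⁻¹ = !![1 / x, -1; 0, x] := by
  rw [matA, inv_fin_two_of_det_eq_one (det_matA hx), neg_zero]

theorem matB_inv (hx : x ≠ 0) : (matB x y)⁻¹ = !![1 / x, 0; -y, x] := by
  rw [matB, inv_fin_two_of_det_eq_one (det_matB hx), neg_zero]

theorem det_matD (hx : x ≠ 0) (hu : 1 - x ^ 2 - y ≠ 0) :
    (matD x y).det =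
      (x ^ 2 * y - x ^ 2 + 1) * (x ^ 2 * y + (x ^ 2 - 1) ^ 2) / (x ^ 2 * (1 - x ^ 2 - y)) := by
  rw [matD, det_fin_two_of]
  field_simp
  ring

theorem matA_mul_matD (hx : x ≠ 0) (hu : 1 - x ^ 2 - y ≠ 0) :
    matA x * matD x y = matD x y * matB x y := by
  simp only [matA, matB, matD, mul_fin_two, EmbeddingLike.apply_eq_iff_eq, vecCons_inj, and_true]
  refine ⟨⟨?_, ?_⟩, ?_, ?_⟩ <;> field_simp <;> ring

theorem matD_mul_matA_mul_matB_mul_matA_inv (hx : x ≠ 0) (hu : 1 - x ^ 2 - y ≠ 0) :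
    matD x y * matA x * matB x y * (matA x)⁻¹ =
      matA x * (matB x y)⁻¹ * matA x * matB x y * (matA x)⁻¹ * matD x y := by
  rw [matA_inv hx, matB_inv hx]
  simp only [matA, matB, matD, mul_fin_two, EmbeddingLike.apply_eq_iff_eq, vecCons_inj, and_true]
  refine ⟨⟨?_, ?_⟩, ?_, ?_⟩ <;> field_simp <;> ring

theorem smul_matD_eq {z w : K} (hx : x ≠ 0) (hu : 1 - x ^ 2 - y ≠ 0)
    (hz : z ^ 2 * w = x ^ 2 * (1 - x ^ 2 - y)) :
    z • matD x y =
      !![-(x * (x ^ 2 * y ^ 2 + x ^ 2 * (x ^ 2 - 3) * y - (x ^ 2 - 1) ^ 2)) / (z * w), z;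
         z * y, z * (1 - x ^ 2) / x] := by
  have hzw : z ^ 2 * w ≠ 0 := hz ▸ mul_ne_zero (pow_ne_zero 2 hx) hu
  have hz0 : z ≠ 0 := by rintro rfl; simp at hzw
  have hw0 : w ≠ 0 := right_ne_zero_of_mul hzw
  simp only [matD, ← hz, smul_of, smul_cons, smul_eq_mul, smul_empty, mul_one,
    EmbeddingLike.apply_eq_iff_eq, vecCons_inj, and_true, true_and]
  constructor <;> field_simp

theorem det_smul_matD {z : K} (hx : x ≠ 0) (hu : 1 - x ^ 2 - y ≠ 0)
    (hz : z ^ 2 * ((x ^ 2 * y - x ^ 2 + 1) * (x ^ 2 * y + (x ^ 2 - 1) ^ 2)) =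
      x ^ 2 * (1 - x ^ 2 - y)) :
    (z • matD x y).det = 1 := by
  rw [det_smul, Fintype.card_fin, det_matD hx hu, mul_div_assoc', hz,
    div_self (mul_ne_zero (pow_ne_zero 2 hx) hu)]

end Whitehead

/-- The two-parameter family of representations of the Whitehead link group:
for `x, y ∈ ℂ` with the stated nondegeneracy conditions and `z` a square root
of `x²(1-x²-y)/w`, where `w = (x²y - x² + 1)(x²y + (x²-1)²)`, the matrices
`A, B, C` lie in `SL₂(ℂ)` and satisfy the Whitehead link group relations
`AC = CB` and `CABA⁻¹ = AB⁻¹ABA⁻¹C`. -/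
theorem whitehead_representation (x y z w : ℂ) (hx : x ≠ 0)
    (hw : w = (x ^ 2 * y - x ^ 2 + 1) * (x ^ 2 * y + (x ^ 2 - 1) ^ 2))
    (hw0 : w ≠ 0) (hxy : 1 - x ^ 2 - y ≠ 0)
    (hz : z ^ 2 = x ^ 2 * (1 - x ^ 2 - y) / w) :
    let A : Matrix (Fin 2) (Fin 2) ℂ := !![x, 1; 0, 1 / x]
    let B : Matrix (Fin 2) (Fin 2) ℂ := !![x, 0; y, 1 / x]
    let C : Matrix (Fin 2) (Fin 2) ℂ :=
      !![-(x * (x ^ 2 * y ^ 2 + x ^ 2 * (x ^ 2 - 3) * y - (x ^ 2 - 1) ^ 2)) / (z * w), z;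
         z * y, z * (1 - x ^ 2) / x]
    A.det = 1 ∧ B.det = 1 ∧ C.det = 1 ∧
    A * C = C * B ∧
    C * A * B * A⁻¹ = A * B⁻¹ * A * B * A⁻¹ * C := by
  intro A B C
  have hz2 : z ^ 2 * w = x ^ 2 * (1 - x ^ 2 - y) := by rw [hz, div_mul_cancel₀ _ hw0]
  have hC : C = z • Whitehead.matD x y := (Whitehead.smul_matD_eq hx hxy hz2).symm
  refine ⟨Whitehead.det_matA hx, Whitehead.det_matB hx, ?_, ?_, ?_⟩
  · rw [hC]
    exact Whitehead.det_smul_matD hx hxy (hw ▸ hz2)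
  · rw [hC, mul_smul_comm, smul_mul_assoc]
    exact congrArg (z • ·) (Whitehead.matA_mul_matD hx hxy)
  · rw [hC]
    simp only [mul_smul_comm, smul_mul_assoc]
    exact congrArg (z • ·) (Whitehead.matD_mul_matA_mul_matB_mul_matA_inv hx hxy)
end

section
/- Let $A = \begin{pmatrix} a & b \\ c & d \end{pmatrix} \in \mathrm{SL}_2(\mathbb{C})$ with $a,c \neq 0$ and $bc \neq 0$. In the upper half-space model, the geodesic $\Sigma$ with endpoints $(0,\infty)$ and its image $A^{-1}(\Sigma)$ (the geodesic with endpoints $-b/a$ and $-d/c$) satisfy: $\cosh$ of the distance between them equals $|ad| + |bc| = |bc+1| + |bc|$. -/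
open OnePoint

/-! Write the axis as the points `(0, s)` and the other geodesic as the points
`z = u + σ (v - u)` at height `t = √(σ (1 - σ)) ‖u - v‖`, `σ ∈ (0, 1)`. Then
`‖z‖² + t² = (1 - σ) ‖u‖² + σ ‖v‖²`, so
`cosh d((0, s), (z, t)) = ((1 - σ) ‖u‖² + σ ‖v‖² + s²) / (2 s t)`, and since
`(1 - σ) ‖u‖² + σ ‖v‖² - σ (1 - σ) (‖u‖ + ‖v‖)² = ((1 - σ) ‖u‖ - σ ‖v‖)²`,
AM-GM bounds this below by `(‖u‖ + ‖v‖) / ‖u - v‖`. Equality holds at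
`σ = ‖u‖ / (‖u‖ + ‖v‖)`, `s = √(‖u‖ ‖v‖)`, unless an endpoint is `0`: then the geodesics are
asymptotic and the infimum `1` is only approached. As `arcosh` is monotone and continuous on
`[1, ∞)`, `cosh` of the distance is this infimum. For `u = -b/a`, `v = -d/c` we have
`u - v = 1 / (a c)`, which turns it into `‖a d‖ + ‖b c‖`. -/

open Set

-- The `arcosh` in `geodDist` is, by its defining formula, Mathlib's `Real.arcosh`.
lemma geodDist_eq_sInf_arcosh_image2 (S T : Set (ℂ × ℝ)) :
    geodDist S T = sInf (Real.arcosh '' image2 coshD S T) := by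
  unfold geodDist
  congr 1
  ext x
  constructor
  · rintro ⟨p, hp, q, hq, rfl⟩
    exact ⟨coshD p q, mem_image2_of_mem hp hq, rfl⟩
  · rintro ⟨_, ⟨p, hp, q, hq, rfl⟩, rfl⟩
    exact ⟨p, hp, q, hq, rfl⟩

lemma Real.cosh_sInf_arcosh_image {C : Set ℝ} {M : ℝ} (hC : IsGLB C M) (hne : C.Nonempty)
    (hM : 1 ≤ M) : Real.cosh (sInf (Real.arcosh '' C)) = M := by
  have hCM : C ⊆ Ici M := fun x hx => hC.1 hx
  have hC1 : C ⊆ Ici 1 := hCM.trans (Ici_subset_Ici.2 hM)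
  have hmono : MonotoneOn Real.arcosh C :=
    Real.strictMonoOn_arcosh.monotoneOn.mono fun x hx => mem_Ioi.2 (zero_lt_one.trans_le (hC1 hx))
  have hcont : ContinuousWithinAt Real.arcosh C (sInf C) := by
    rw [hC.csInf_eq hne]
    exact (Real.continuousOn_arcosh M hM).mono hC1
  rw [← hmono.map_csInf_of_continuousWithinAt hcont hne ⟨M, hC.1⟩, hC.csInf_eq hne,
    Real.cosh_arcosh hM]

lemma geodesicUHS_zero_infty :
    geodesicUHS ((0 : ℂ) : OnePoint ℂ) OnePoint.infty = (fun s : ℝ => ((0 : ℂ), s)) '' Ioi 0 := by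
  ext ⟨z, s⟩
  simp [geodesicUHS, and_comm, eq_comm]

noncomputable def semicirclePoint (u v : ℂ) (σ : ℝ) : ℂ × ℝ :=
  (u + σ * (v - u), √(σ * (1 - σ)) * ‖u - v‖)

lemma Complex.norm_add_ofReal_mul_sub_sq (u v : ℂ) (σ : ℝ) :
    ‖u + σ * (v - u)‖ ^ 2 = (1 - σ) * ‖u‖ ^ 2 + σ * ‖v‖ ^ 2 - σ * (1 - σ) * ‖u - v‖ ^ 2 := by
  simp only [Complex.sq_norm, Complex.normSq_apply, Complex.add_re, Complex.add_im,
    Complex.mul_re, Complex.mul_im, Complex.sub_re, Complex.sub_im,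
    Complex.ofReal_re, Complex.ofReal_im]
  ring

lemma Complex.norm_add_ofReal_mul_sub_sub_midpoint_sq (u v : ℂ) (σ : ℝ) :
    ‖u + σ * (v - u) - (u + v) / 2‖ ^ 2 = (σ - 1 / 2) ^ 2 * ‖u - v‖ ^ 2 := by
  have h : u + σ * (v - u) - (u + v) / 2 = ((σ - 1 / 2 : ℝ) : ℂ) * (v - u) := by
    push_cast; ring
  rw [h, norm_mul, mul_pow, Complex.norm_real, Real.norm_eq_abs, sq_abs, norm_sub_rev]

lemma geodesicUHS_coe_coe {u v : ℂ} (huv : u ≠ v) :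
    geodesicUHS (u : OnePoint ℂ) (v : OnePoint ℂ) = semicirclePoint u v '' Ioo 0 1 := by
  have hL : 0 < ‖u - v‖ := norm_pos_iff.2 (sub_ne_zero.2 huv)
  ext ⟨z, t⟩
  simp only [geodesicUHS, mem_ofPred_eq, mem_image, semicirclePoint, Prod.mk.injEq,
    norm_sub_rev v u]
  constructor
  · rintro ⟨ht, ⟨σ, rfl⟩, hcirc⟩
    rw [Complex.norm_add_ofReal_mul_sub_sub_midpoint_sq] at hcirc
    have ht2 : t ^ 2 = σ * (1 - σ) * ‖u - v‖ ^ 2 := by linarith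
    have hσ : 0 < σ * (1 - σ) := by
      by_contra! h
      nlinarith [mul_nonpos_of_nonpos_of_nonneg h (sq_nonneg ‖u - v‖)]
    refine ⟨σ, ⟨?_, ?_⟩, rfl, ?_⟩
    · nlinarith
    · nlinarith
    · rw [← Real.sqrt_sq hL.le, ← Real.sqrt_mul hσ.le, ← ht2, Real.sqrt_sq ht.le]
  · rintro ⟨σ, ⟨hσ0, hσ1⟩, rfl, rfl⟩
    have hσ : 0 < σ * (1 - σ) := mul_pos hσ0 (by linarith)
    refine ⟨by positivity, ⟨σ, rfl⟩, ?_⟩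
    rw [Complex.norm_add_ofReal_mul_sub_sub_midpoint_sq, mul_pow, Real.sq_sqrt hσ.le]
    ring

lemma geodesicUHS_coe_comm {u v : ℂ} (huv : u ≠ v) :
    geodesicUHS (u : OnePoint ℂ) (v : OnePoint ℂ) =
      geodesicUHS (v : OnePoint ℂ) (u : OnePoint ℂ) := by
  have hswap : ∀ σ, semicirclePoint v u (1 - σ) = semicirclePoint u v σ := fun σ => by
    simp only [semicirclePoint, Prod.mk.injEq, norm_sub_rev v u]
    constructor
    · push_cast; ring
    · ring_nf
  rw [geodesicUHS_coe_coe huv, geodesicUHS_coe_coe huv.symm, ← funext hswap,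
    ← image_image (semicirclePoint v u) (fun σ => 1 - σ), image_const_sub_Ioo]
  norm_num

lemma coshD_axis {z : ℂ} {s t : ℝ} (hs : 0 < s) (ht : 0 < t) :
    coshD (0, s) (z, t) = (‖z‖ ^ 2 + t ^ 2 + s ^ 2) / (2 * s * t) := by
  rw [coshD, zero_sub, norm_neg]
  field_simp
  ring

lemma coshD_axis_semicirclePoint {u v : ℂ} (huv : u ≠ v) {s σ : ℝ} (hs : 0 < s)
    (hσ : σ ∈ Ioo 0 1) :
    coshD (0, s) (semicirclePoint u v σ) =
      ((1 - σ) * ‖u‖ ^ 2 + σ * ‖v‖ ^ 2 + s ^ 2) / (2 * s * (√(σ * (1 - σ)) * ‖u - v‖)) := by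
  have hσ' : 0 < σ * (1 - σ) := mul_pos hσ.1 (by linarith [hσ.2])
  have hL : 0 < ‖u - v‖ := norm_pos_iff.2 (sub_ne_zero.2 huv)
  rw [semicirclePoint, coshD_axis hs (by positivity), Complex.norm_add_ofReal_mul_sub_sq, mul_pow,
    Real.sq_sqrt hσ'.le]
  ring_nf

lemma div_norm_sub_le_coshD_axis_semicirclePoint {u v : ℂ} (huv : u ≠ v) {s σ : ℝ} (hs : 0 < s)
    (hσ : σ ∈ Ioo 0 1) :
    (‖u‖ + ‖v‖) / ‖u - v‖ ≤ coshD (0, s) (semicirclePoint u v σ) := by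
  have hσ' : 0 < σ * (1 - σ) := mul_pos hσ.1 (by linarith [hσ.2])
  have hL : 0 < ‖u - v‖ := norm_pos_iff.2 (sub_ne_zero.2 huv)
  have hk2 : √(σ * (1 - σ)) ^ 2 = σ * (1 - σ) := Real.sq_sqrt hσ'.le
  have key : (1 - σ) * ‖u‖ ^ 2 + σ * ‖v‖ ^ 2 + s ^ 2 - (‖u‖ + ‖v‖) * (2 * s * √(σ * (1 - σ))) =
      ((1 - σ) * ‖u‖ - σ * ‖v‖) ^ 2 + (s - √(σ * (1 - σ)) * (‖u‖ + ‖v‖)) ^ 2 := by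
    linear_combination (-(‖u‖ + ‖v‖) ^ 2) * hk2
  have hge : (‖u‖ + ‖v‖) * (2 * s * √(σ * (1 - σ))) ≤
      (1 - σ) * ‖u‖ ^ 2 + σ * ‖v‖ ^ 2 + s ^ 2 :=
    sub_nonneg.1 (key ▸ by positivity)
  rw [coshD_axis_semicirclePoint huv hs hσ, ← mul_assoc, div_le_div_iff₀ hL (by positivity),
    ← mul_assoc]
  exact mul_le_mul_of_nonneg_right hge hL.le

lemma exists_coshD_axis_semicirclePoint_eq_div_norm_sub {u v : ℂ} (hu : u ≠ 0) (hv : v ≠ 0)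
    (huv : u ≠ v) :
    ∃ s > 0, ∃ σ ∈ Ioo 0 1, coshD (0, s) (semicirclePoint u v σ) = (‖u‖ + ‖v‖) / ‖u - v‖ := by
  have hx : 0 < ‖u‖ := norm_pos_iff.2 hu
  have hy : 0 < ‖v‖ := norm_pos_iff.2 hv
  have hL : 0 < ‖u - v‖ := norm_pos_iff.2 (sub_ne_zero.2 huv)
  have hxy : 0 < ‖u‖ * ‖v‖ := mul_pos hx hy
  have hσ : ‖u‖ / (‖u‖ + ‖v‖) ∈ Ioo 0 1 :=
    ⟨by positivity, (div_lt_one (by positivity)).2 (by linarith)⟩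
  have hk : √(‖u‖ / (‖u‖ + ‖v‖) * (1 - ‖u‖ / (‖u‖ + ‖v‖))) = √(‖u‖ * ‖v‖) / (‖u‖ + ‖v‖) := by
    rw [show ‖u‖ / (‖u‖ + ‖v‖) * (1 - ‖u‖ / (‖u‖ + ‖v‖)) = ‖u‖ * ‖v‖ / (‖u‖ + ‖v‖) ^ 2 by
        field_simp; ring,
      Real.sqrt_div' _ (by positivity), Real.sqrt_sq (by positivity)]
  refine ⟨_, Real.sqrt_pos.2 hxy, _, hσ, ?_⟩
  rw [coshD_axis_semicirclePoint huv (Real.sqrt_pos.2 hxy) hσ, hk, Real.sq_sqrt hxy.le]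
  have hs : √(‖u‖ * ‖v‖) ^ 2 = ‖u‖ * ‖v‖ := Real.sq_sqrt hxy.le
  field_simp
  linear_combination (-2 * (‖u‖ + ‖v‖)) * hs

lemma exists_coshD_axis_semicirclePoint_zero_eq {u : ℂ} (hu : u ≠ 0) {c : ℝ} (hc : 1 < c) :
    ∃ s > 0, ∃ σ ∈ Ioo 0 1, coshD (0, s) (semicirclePoint u 0 σ) = c := by
  have hx : 0 < ‖u‖ := norm_pos_iff.2 hu
  have hc2 : 1 / c ^ 2 < 1 := by rw [div_lt_one (by positivity)]; nlinarith
  have hσ : 1 / c ^ 2 ∈ Ioo 0 1 := ⟨by positivity, hc2⟩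
  have hw : 0 < 1 - 1 / c ^ 2 := by linarith
  have hk : √(1 / c ^ 2 * (1 - 1 / c ^ 2)) = √(1 - 1 / c ^ 2) / c := by
    rw [Real.sqrt_mul (by positivity), Real.sqrt_div' _ (by positivity), Real.sqrt_one,
      Real.sqrt_sq (by positivity)]
    ring
  have hw0 : 0 < √(1 - 1 / c ^ 2) := Real.sqrt_pos.2 hw
  refine ⟨√(1 - 1 / c ^ 2) * ‖u‖, by positivity, _, hσ, ?_⟩
  rw [coshD_axis_semicirclePoint hu (by positivity) hσ, hk, sub_zero, norm_zero, mul_pow]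
  set w := √(1 - 1 / c ^ 2)
  have hw2 : w ^ 2 = 1 - 1 / c ^ 2 := Real.sq_sqrt hw.le
  have hcw : c ^ 2 * w ^ 2 = c ^ 2 - 1 := by rw [hw2]; field_simp
  rw [hw2]
  field_simp
  linear_combination (-2 * ‖u‖ ^ 2) * hcw

lemma image2_coshD_axis_geodesicUHS {u v : ℂ} (huv : u ≠ v) :
    image2 coshD (geodesicUHS ((0 : ℂ) : OnePoint ℂ) OnePoint.infty) (geodesicUHS u v) =
      image2 (fun s σ => coshD (0, s) (semicirclePoint u v σ)) (Ioi 0) (Ioo 0 1) := by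
  rw [geodesicUHS_zero_infty, geodesicUHS_coe_coe huv, image2_image_left, image2_image_right]

lemma isGLB_coshD_axis_geodesicUHS {u v : ℂ} (hu : u ≠ 0) (huv : u ≠ v) :
    IsGLB (image2 coshD (geodesicUHS ((0 : ℂ) : OnePoint ℂ) OnePoint.infty) (geodesicUHS u v))
      ((‖u‖ + ‖v‖) / ‖u - v‖) := by
  rw [image2_coshD_axis_geodesicUHS huv]
  have hlb : (‖u‖ + ‖v‖) / ‖u - v‖ ∈
      lowerBounds (image2 (fun s σ => coshD (0, s) (semicirclePoint u v σ)) (Ioi 0) (Ioo 0 1)) := by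
    rintro _ ⟨s, hs, σ, hσ, rfl⟩
    exact div_norm_sub_le_coshD_axis_semicirclePoint huv hs hσ
  by_cases hv : v = 0
  · subst hv
    rw [norm_zero, add_zero, sub_zero, div_self (norm_ne_zero_iff.2 hu)] at hlb ⊢
    exact isGLB_Ioi.of_subset_of_superset isLeast_Ici.isGLB
      (fun c hc => exists_coshD_axis_semicirclePoint_zero_eq hu hc) (fun x hx => hlb hx)
  · exact IsLeast.isGLB ⟨exists_coshD_axis_semicirclePoint_eq_div_norm_sub hu hv huv, hlb⟩

lemma cosh_geodDist_axis_geodesicUHS {u v : ℂ} (huv : u ≠ v) :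
    Real.cosh (geodDist (geodesicUHS ((0 : ℂ) : OnePoint ℂ) OnePoint.infty) (geodesicUHS u v)) =
      (‖u‖ + ‖v‖) / ‖u - v‖ := by
  wlog hu : u ≠ 0 generalizing u v
  · rw [geodesicUHS_coe_comm huv, add_comm, norm_sub_rev]
    exact this huv.symm (by rwa [not_not.1 hu, ne_comm] at huv)
  have hne : (image2 coshD (geodesicUHS ((0 : ℂ) : OnePoint ℂ) OnePoint.infty)
      (geodesicUHS u v)).Nonempty := by
    rw [image2_coshD_axis_geodesicUHS huv]
    exact nonempty_Ioi.image2 (nonempty_Ioo.2 zero_lt_one)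
  have hM : 1 ≤ (‖u‖ + ‖v‖) / ‖u - v‖ :=
    (one_le_div (norm_pos_iff.2 (sub_ne_zero.2 huv))).2 (norm_sub_le u v)
  rw [geodDist_eq_sInf_arcosh_image2,
    Real.cosh_sInf_arcosh_image (isGLB_coshD_axis_geodesicUHS hu huv) hne hM]

theorem cosh_dist_axis_general (a b c d : ℂ) (hdet : a * d - b * c = 1)
    (ha : a ≠ 0) (hc : c ≠ 0) :
    Real.cosh (geodDist (geodesicUHS ((0 : ℂ) : OnePoint ℂ) (OnePoint.infty))
        (geodesicUHS ((-b / a : ℂ) : OnePoint ℂ) ((-d / c : ℂ) : OnePoint ℂ))) =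
      ‖a * d‖ + ‖b * c‖ ∧
    ‖a * d‖ + ‖b * c‖ =
      ‖b * c + 1‖ + ‖b * c‖ := by
  have had : a * d = b * c + 1 := by linear_combination hdet
  have hsub : -b / a - -d / c = 1 / (a * c) := by
    field_simp
    linear_combination hdet
  have hne : -b / a ≠ -d / c := by
    rw [← sub_ne_zero, hsub]
    exact one_div_ne_zero (mul_ne_zero ha hc)
  refine ⟨?_, by rw [had]⟩
  rw [cosh_geodDist_axis_geodesicUHS hne, hsub]
  simp only [norm_div, norm_mul, norm_one, norm_neg]
  field_simp
  ring

/-- For `A = [[a,b],[c,d]] ∈ SL₂(ℂ)` with `a, c ≠ 0` and `bc ≠ 0`, the cosh of the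
hyperbolic distance between the geodesic `Σ` with endpoints `(0, ∞)` and its image
`A⁻¹(Σ)`, the geodesic with endpoints `-b/a` and `-d/c`, equals
`|ad| + |bc| = |bc + 1| + |bc|`. -/
theorem cosh_dist_axis (a b c d : ℂ) (hdet : a * d - b * c = 1)
    (ha : a ≠ 0) (hc : c ≠ 0) (hbc : b * c ≠ 0)
    (hdisj : Disjoint (geodesicUHS ((0 : ℂ) : OnePoint ℂ) (OnePoint.infty))
      (geodesicUHS ((-b / a : ℂ) : OnePoint ℂ) ((-d / c : ℂ) : OnePoint ℂ))) :
    Real.cosh (geodDist (geodesicUHS ((0 : ℂ) : OnePoint ℂ) (OnePoint.infty))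
        (geodesicUHS ((-b / a : ℂ) : OnePoint ℂ) ((-d / c : ℂ) : OnePoint ℂ))) =
      ‖a * d‖ + ‖b * c‖ ∧
    ‖a * d‖ + ‖b * c‖ =
      ‖b * c + 1‖ + ‖b * c‖ :=
  cosh_dist_axis_general a b c d hdet ha hc
end
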